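/- arXiv:math/0702494 — 6 statements merged into one kernel-verified Lean document; each statement's English description precedes it below -/
import Mathlib

section
/- The differential operators D and E commute: for every smooth function F from ℝ to ℂ^{ℓ+1} (equivalently, to (ℓ+1)×(ℓ+1) complex matrices) and every u ∈ ℝ, D(EF)(u) = E(DF)(u). -/
open Polynomial Matrix Finset

noncomputable section

/-- The matrix `C`. -/
def Cmat (β : ℝ) (ℓ : ℕ) : Matrix (Fin (ℓ+1)) (Fin (ℓ+1)) ℂ :=
  Matrix.of fun i j =>
    (if (i : ℕ) = (j : ℕ) then (β : ℂ) + 1 + 2 * (i : ℕ) else 0)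
      + (if (i : ℕ) = (j : ℕ) + 1 then ((i : ℕ) : ℂ) else 0)

/-- The matrix `U`. -/
def Umat (α β : ℝ) (ℓ : ℕ) : Matrix (Fin (ℓ+1)) (Fin (ℓ+1)) ℂ :=
  Matrix.of fun i j =>
    if (i : ℕ) = (j : ℕ) then (α : ℂ) + β + ℓ + (i : ℕ) + 2 else 0

/-- The matrix `V`. -/
def Vmat (α β k : ℝ) (ℓ : ℕ) : Matrix (Fin (ℓ+1)) (Fin (ℓ+1)) ℂ :=
  Matrix.of fun i j =>
    (if (i : ℕ) = (j : ℕ) then ((i : ℕ) : ℂ) * ((α : ℂ) + β + (i : ℕ) - k + 1) else 0)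
      - (if (j : ℕ) = (i : ℕ) + 1 then ((ℓ : ℂ) - (i : ℕ)) * ((i : ℕ) + (β : ℂ) - k + 1) else 0)

/-- The matrix `Q₀ = Σ 3i·E_{i,i−1}`. -/
def Q0mat (ℓ : ℕ) : Matrix (Fin (ℓ+1)) (Fin (ℓ+1)) ℂ :=
  Matrix.of fun i j => if (i : ℕ) = (j : ℕ) + 1 then 3 * ((i : ℕ) : ℂ) else 0

/-- The matrix `Q₁ = Σ (α−ℓ+3i)E_{ii}`. -/
def Q1mat (α : ℝ) (ℓ : ℕ) : Matrix (Fin (ℓ+1)) (Fin (ℓ+1)) ℂ :=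
  Matrix.of fun i j => if (i : ℕ) = (j : ℕ) then (α : ℂ) - ℓ + 3 * (i : ℕ) else 0

/-- The matrix `P₀`. -/
def P0mat (α β k : ℝ) (ℓ : ℕ) : Matrix (Fin (ℓ+1)) (Fin (ℓ+1)) ℂ :=
  Matrix.of fun i j =>
    (if (i : ℕ) = (j : ℕ) then
        ((α : ℂ) + 2 * ℓ) * ((β : ℂ) + 1 + 2 * (i : ℕ)) - 3 * (k : ℂ) * ((ℓ : ℂ) - (i : ℕ))
          - 3 * ((i : ℕ) : ℂ) * ((β : ℂ) - k + (i : ℕ))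
      else 0)
      - (if (i : ℕ) = (j : ℕ) + 1 then
          ((i : ℕ) : ℂ) * (3 * (i : ℕ) + 3 * (β : ℂ) - 3 * k + 3 + ℓ + 2 * α)
        else 0)

/-- The matrix `P₁`. -/
def P1mat (α β k : ℝ) (ℓ : ℕ) : Matrix (Fin (ℓ+1)) (Fin (ℓ+1)) ℂ :=
  Matrix.of fun i j =>
    (if (i : ℕ) = (j : ℕ) then
        -(((α : ℂ) - ℓ + 3 * (i : ℕ)) * ((α : ℂ) + β + ℓ + (i : ℕ) + 2))
      else 0)
      + (if (j : ℕ) = (i : ℕ) + 1 then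
          3 * ((β : ℂ) - k + 1 + (i : ℕ)) * ((ℓ : ℂ) - (i : ℕ))
        else 0)

/-- Entrywise derivative of a matrix-valued function. -/
def matDeriv {d : ℕ} (F : ℝ → Matrix (Fin d) (Fin d) ℂ) (t : ℝ) : Matrix (Fin d) (Fin d) ℂ :=
  Matrix.of fun i j => deriv (fun s => F s i j) t

/-- The differential operator `D`: `(DF)(u) = u(1-u)F''(u) + (C - uU)F'(u) - V F(u)`. -/
def Dop (α β k : ℝ) (ℓ : ℕ) (F : ℝ → Matrix (Fin (ℓ+1)) (Fin (ℓ+1)) ℂ) (u : ℝ) :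
    Matrix (Fin (ℓ+1)) (Fin (ℓ+1)) ℂ :=
  ((u * (1 - u) : ℝ) : ℂ) • matDeriv (matDeriv F) u
    + (Cmat β ℓ - (u : ℂ) • Umat α β ℓ) * matDeriv F u
    - Vmat α β k ℓ * F u

/-- The differential operator `E`:
`(EF)(u) = (1-u)(Q₀+uQ₁)F''(u) + (P₀+uP₁)F'(u) - (α+2ℓ+3k)V F(u)`. -/
def Eop (α β k : ℝ) (ℓ : ℕ) (F : ℝ → Matrix (Fin (ℓ+1)) (Fin (ℓ+1)) ℂ) (u : ℝ) :
    Matrix (Fin (ℓ+1)) (Fin (ℓ+1)) ℂ :=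
  ((1 - u : ℝ) : ℂ) • ((Q0mat ℓ + (u : ℂ) • Q1mat α ℓ) * matDeriv (matDeriv F) u)
    + (P0mat α β k ℓ + (u : ℂ) • P1mat α β k ℓ) * matDeriv F u
    - ((α + 2 * ℓ + 3 * k : ℝ) : ℂ) • (Vmat α β k ℓ * F u)


def DgM (ℓ : ℕ) (d : ℕ → ℂ) : Matrix (Fin (ℓ+1)) (Fin (ℓ+1)) ℂ :=
  Matrix.of fun i j => if (i : ℕ) = (j : ℕ) then d (i : ℕ) else 0

def LoM (ℓ : ℕ) (l : ℕ → ℂ) : Matrix (Fin (ℓ+1)) (Fin (ℓ+1)) ℂ :=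
  Matrix.of fun i j => if (i : ℕ) = (j : ℕ) + 1 then l (i : ℕ) else 0

def UpM (ℓ : ℕ) (r : ℕ → ℂ) : Matrix (Fin (ℓ+1)) (Fin (ℓ+1)) ℂ :=
  Matrix.of fun i j => if (j : ℕ) = (i : ℕ) + 1 then r (i : ℕ) else 0

def Lo2M (ℓ : ℕ) (f : ℕ → ℂ) : Matrix (Fin (ℓ+1)) (Fin (ℓ+1)) ℂ :=
  Matrix.of fun i j => if (i : ℕ) = (j : ℕ) + 2 then f (i : ℕ) else 0

def Up2M (ℓ : ℕ) (f : ℕ → ℂ) : Matrix (Fin (ℓ+1)) (Fin (ℓ+1)) ℂ :=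
  Matrix.of fun i j => if (j : ℕ) = (i : ℕ) + 2 then f (i : ℕ) else 0

def Tri (ℓ : ℕ) (d l r : ℕ → ℂ) : Matrix (Fin (ℓ+1)) (Fin (ℓ+1)) ℂ :=
  DgM ℓ d + LoM ℓ l + UpM ℓ r

def Penta (ℓ : ℕ) (d l r a b : ℕ → ℂ) : Matrix (Fin (ℓ+1)) (Fin (ℓ+1)) ℂ :=
  DgM ℓ d + LoM ℓ l + UpM ℓ r + Lo2M ℓ a + Up2M ℓ b

lemma sum_single_val {N : ℕ} (f : Fin N → ℂ) (m : ℕ) (hm : m < N)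
    (h0 : ∀ x : Fin N, (x : ℕ) ≠ m → f x = 0) : (∑ x, f x) = f ⟨m, hm⟩ :=
  Finset.sum_eq_single ⟨m, hm⟩ (fun b _ hb => h0 b (fun hc => hb (Fin.ext hc))) (by simp)

lemma Dg_mul_Dg (ℓ : ℕ) (d1 d2 : ℕ → ℂ) :
    DgM ℓ d1 * DgM ℓ d2 = DgM ℓ (fun n => d1 n * d2 n) := by
  ext i j
  rw [Matrix.mul_apply]
  rw [sum_single_val _ (i : ℕ) i.isLt (by
    intro x hx
    simp only [DgM, Matrix.of_apply, ite_mul, zero_mul]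
    split_ifs <;> first | rfl | omega)]
  simp only [DgM, Matrix.of_apply]
  split_ifs <;> first | ring | omega

lemma Dg_mul_Lo (ℓ : ℕ) (d1 l2 : ℕ → ℂ) :
    DgM ℓ d1 * LoM ℓ l2 = LoM ℓ (fun n => d1 n * l2 n) := by
  ext i j
  rw [Matrix.mul_apply]
  rw [sum_single_val _ (i : ℕ) i.isLt (by
    intro x hx
    simp only [DgM, LoM, Matrix.of_apply, ite_mul, zero_mul]
    split_ifs <;> first | rfl | omega)]
  simp only [DgM, LoM, Matrix.of_apply]
  split_ifs <;> first | ring | omega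

lemma Dg_mul_Up (ℓ : ℕ) (d1 r2 : ℕ → ℂ) :
    DgM ℓ d1 * UpM ℓ r2 = UpM ℓ (fun n => d1 n * r2 n) := by
  ext i j
  rw [Matrix.mul_apply]
  rw [sum_single_val _ (i : ℕ) i.isLt (by
    intro x hx
    simp only [DgM, UpM, Matrix.of_apply, ite_mul, zero_mul]
    split_ifs <;> first | rfl | omega)]
  simp only [DgM, UpM, Matrix.of_apply]
  split_ifs <;> first | ring | omega

lemma Lo_mul_Dg (ℓ : ℕ) (l1 d2 : ℕ → ℂ) :
    LoM ℓ l1 * DgM ℓ d2 = LoM ℓ (fun n => l1 n * d2 (n - 1)) := by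
  ext i j
  rw [Matrix.mul_apply]
  rw [sum_single_val _ (j : ℕ) j.isLt (by
    intro x hx
    simp only [DgM, LoM, Matrix.of_apply, ite_mul, zero_mul, mul_ite, mul_zero]
    split_ifs <;> first | rfl | omega)]
  simp only [DgM, LoM, Matrix.of_apply, Fin.val_mk, ite_true]
  by_cases hc : (i : ℕ) = (j : ℕ) + 1
  · rw [if_pos hc, if_pos hc, show (i : ℕ) - 1 = (j : ℕ) by omega]
  · rw [if_neg hc, if_neg hc, zero_mul]

lemma Up_mul_Dg (ℓ : ℕ) (r1 d2 : ℕ → ℂ) :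
    UpM ℓ r1 * DgM ℓ d2 = UpM ℓ (fun n => r1 n * d2 (n + 1)) := by
  ext i j
  rw [Matrix.mul_apply]
  rw [sum_single_val _ (j : ℕ) j.isLt (by
    intro x hx
    simp only [DgM, UpM, Matrix.of_apply, ite_mul, zero_mul, mul_ite, mul_zero]
    split_ifs <;> first | rfl | omega)]
  simp only [DgM, UpM, Matrix.of_apply, Fin.val_mk, ite_true]
  by_cases hc : (j : ℕ) = (i : ℕ) + 1
  · rw [if_pos hc, if_pos hc, show (i : ℕ) + 1 = (j : ℕ) by omega]
  · rw [if_neg hc, if_neg hc, zero_mul]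

lemma Lo_mul_Lo (ℓ : ℕ) (l1 l2 : ℕ → ℂ) :
    LoM ℓ l1 * LoM ℓ l2 = Lo2M ℓ (fun n => l1 n * l2 (n - 1)) := by
  ext i j
  rw [Matrix.mul_apply]
  by_cases h : (i : ℕ) = (j : ℕ) + 2
  · rw [sum_single_val _ ((j : ℕ) + 1) (by omega) (by
      intro x hx
      simp only [LoM, Matrix.of_apply, ite_mul, zero_mul, mul_ite, mul_zero]
      split_ifs <;> first | rfl | omega)]
    simp only [LoM, Lo2M, Matrix.of_apply]
    split_ifs with h1 h2 h3 <;> first | (rw [show (i : ℕ) - 1 = (j : ℕ) + 1 by omega]) | omega | rfl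
  · rw [Finset.sum_eq_zero (by
      intro x _
      simp only [LoM, Matrix.of_apply, ite_mul, zero_mul, mul_ite, mul_zero]
      split_ifs <;> first | rfl | omega)]
    simp only [Lo2M, Matrix.of_apply, if_neg h]

lemma Up_mul_Up (ℓ : ℕ) (r1 r2 : ℕ → ℂ) :
    UpM ℓ r1 * UpM ℓ r2 = Up2M ℓ (fun n => r1 n * r2 (n + 1)) := by
  ext i j
  rw [Matrix.mul_apply]
  by_cases h : (j : ℕ) = (i : ℕ) + 2
  · rw [sum_single_val _ ((i : ℕ) + 1) (by omega) (by
      intro x hx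
      simp only [UpM, Matrix.of_apply, ite_mul, zero_mul, mul_ite, mul_zero]
      split_ifs <;> first | rfl | omega)]
    simp only [UpM, Up2M, Matrix.of_apply]
    split_ifs <;> first | rfl | omega
  · rw [Finset.sum_eq_zero (by
      intro x _
      simp only [UpM, Matrix.of_apply, ite_mul, zero_mul, mul_ite, mul_zero]
      split_ifs <;> first | rfl | omega)]
    simp only [Up2M, Matrix.of_apply, if_neg h]

lemma Lo_mul_Up (ℓ : ℕ) (l1 r2 : ℕ → ℂ) (h1 : l1 0 = 0) :
    LoM ℓ l1 * UpM ℓ r2 = DgM ℓ (fun n => l1 n * r2 (n - 1)) := by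
  ext i j
  rw [Matrix.mul_apply]
  by_cases h : (i : ℕ) = (j : ℕ)
  · by_cases h0 : (i : ℕ) = 0
    · rw [Finset.sum_eq_zero (by
        intro x _
        simp only [LoM, UpM, Matrix.of_apply, ite_mul, zero_mul, mul_ite, mul_zero]
        split_ifs <;> first | rfl | omega)]
      simp only [DgM, Matrix.of_apply, if_pos h]
      rw [h0, h1, zero_mul]
    · rw [sum_single_val _ ((i : ℕ) - 1) (by omega) (by
        intro x hx
        simp only [LoM, UpM, Matrix.of_apply, ite_mul, zero_mul, mul_ite, mul_zero]
        split_ifs <;> first | rfl | omega)]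
      simp only [LoM, UpM, DgM, Matrix.of_apply]
      split_ifs <;> first | rfl | omega
  · rw [Finset.sum_eq_zero (by
      intro x _
      simp only [LoM, UpM, Matrix.of_apply, ite_mul, zero_mul, mul_ite, mul_zero]
      split_ifs <;> first | rfl | omega)]
    simp only [DgM, Matrix.of_apply, if_neg h]

lemma Up_mul_Lo (ℓ : ℕ) (r1 l2 : ℕ → ℂ) (h2 : r1 ℓ = 0) :
    UpM ℓ r1 * LoM ℓ l2 = DgM ℓ (fun n => r1 n * l2 (n + 1)) := by
  ext i j
  rw [Matrix.mul_apply]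
  by_cases h : (i : ℕ) = (j : ℕ)
  · by_cases h0 : (i : ℕ) = ℓ
    · rw [Finset.sum_eq_zero (by
        intro x _
        have := x.isLt
        simp only [LoM, UpM, Matrix.of_apply, ite_mul, zero_mul, mul_ite, mul_zero]
        split_ifs <;> first | rfl | omega)]
      simp only [DgM, Matrix.of_apply, if_pos h]
      rw [h0, h2, zero_mul]
    · rw [sum_single_val _ ((i : ℕ) + 1) (by have := i.isLt; omega) (by
        intro x hx
        simp only [LoM, UpM, Matrix.of_apply, ite_mul, zero_mul, mul_ite, mul_zero]
        split_ifs <;> first | rfl | omega)]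
      simp only [LoM, UpM, DgM, Matrix.of_apply]
      split_ifs <;> first | rfl | omega
  · rw [Finset.sum_eq_zero (by
      intro x _
      simp only [LoM, UpM, Matrix.of_apply, ite_mul, zero_mul, mul_ite, mul_zero]
      split_ifs <;> first | rfl | omega)]
    simp only [DgM, Matrix.of_apply, if_neg h]

lemma Tri_mul (ℓ : ℕ) (d1 l1 r1 d2 l2 r2 : ℕ → ℂ) (h1 : l1 0 = 0) (h2 : r1 ℓ = 0) :
    Tri ℓ d1 l1 r1 * Tri ℓ d2 l2 r2 =
      Penta ℓ (fun n => d1 n * d2 n + l1 n * r2 (n - 1) + r1 n * l2 (n + 1))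
        (fun n => d1 n * l2 n + l1 n * d2 (n - 1))
        (fun n => d1 n * r2 n + r1 n * d2 (n + 1))
        (fun n => l1 n * l2 (n - 1))
        (fun n => r1 n * r2 (n + 1)) := by
  unfold Tri
  rw [Matrix.add_mul, Matrix.add_mul, Matrix.mul_add, Matrix.mul_add, Matrix.mul_add,
    Matrix.mul_add, Matrix.mul_add, Matrix.mul_add]
  rw [Dg_mul_Dg, Dg_mul_Lo, Dg_mul_Up, Lo_mul_Dg, Lo_mul_Lo, Lo_mul_Up ℓ _ _ h1,
    Up_mul_Dg, Up_mul_Lo ℓ _ _ h2, Up_mul_Up]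
  ext i j
  simp only [Penta, DgM, LoM, UpM, Lo2M, Up2M, Matrix.add_apply, Matrix.of_apply]
  split_ifs <;> ring

lemma Penta_add (ℓ : ℕ) (d1 l1 r1 a1 b1 d2 l2 r2 a2 b2 : ℕ → ℂ) :
    Penta ℓ d1 l1 r1 a1 b1 + Penta ℓ d2 l2 r2 a2 b2 =
      Penta ℓ (fun n => d1 n + d2 n) (fun n => l1 n + l2 n) (fun n => r1 n + r2 n)
        (fun n => a1 n + a2 n) (fun n => b1 n + b2 n) := by
  ext i j
  simp only [Penta, DgM, LoM, UpM, Lo2M, Up2M, Matrix.add_apply, Matrix.of_apply]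
  split_ifs <;> ring

lemma Penta_smul (ℓ : ℕ) (z : ℂ) (d l r a b : ℕ → ℂ) :
    z • Penta ℓ d l r a b =
      Penta ℓ (fun n => z * d n) (fun n => z * l n) (fun n => z * r n)
        (fun n => z * a n) (fun n => z * b n) := by
  ext i j
  simp only [Penta, DgM, LoM, UpM, Lo2M, Up2M, Matrix.add_apply, Matrix.of_apply,
    Matrix.smul_apply, smul_eq_mul]
  split_ifs <;> ring

lemma Tri_penta (ℓ : ℕ) (d l r : ℕ → ℂ) :
    Tri ℓ d l r = Penta ℓ d l r (fun _ => 0) (fun _ => 0) := by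
  ext i j
  simp only [Penta, Tri, DgM, LoM, UpM, Lo2M, Up2M, Matrix.add_apply, Matrix.of_apply]
  split_ifs <;> ring

lemma Penta_congr (ℓ : ℕ) {d l r a b d' l' r' a' b' : ℕ → ℂ}
    (hd : ∀ n, n ≤ ℓ → d n = d' n) (hl : ∀ n, n ≤ ℓ → l n = l' n)
    (hr : ∀ n, n ≤ ℓ → r n = r' n) (ha : ∀ n, n ≤ ℓ → a n = a' n)
    (hb : ∀ n, n ≤ ℓ → b n = b' n) :
    Penta ℓ d l r a b = Penta ℓ d' l' r' a' b' := by
  ext i j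
  have h1 := hd (i : ℕ) (by have := i.isLt; omega)
  have h2 := hl (i : ℕ) (by have := i.isLt; omega)
  have h3 := hr (i : ℕ) (by have := i.isLt; omega)
  have h4 := ha (i : ℕ) (by have := i.isLt; omega)
  have h5 := hb (i : ℕ) (by have := i.isLt; omega)
  simp only [Penta, DgM, LoM, UpM, Lo2M, Up2M, Matrix.add_apply, Matrix.of_apply, h1, h2, h3,
    h4, h5]
-- Tri conversions and operator-coefficient identities

section Ident

variable (α β k : ℝ) (ℓ : ℕ) (u : ℝ)

def cC : ℂ := (α : ℂ) + 2 * ℓ + 3 * k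

def A1e : Matrix (Fin (ℓ+1)) (Fin (ℓ+1)) ℂ := Cmat β ℓ - (u : ℂ) • Umat α β ℓ
def B2e : Matrix (Fin (ℓ+1)) (Fin (ℓ+1)) ℂ :=
  (1 - (u : ℂ)) • Q0mat ℓ + ((u : ℂ) * (1 - (u : ℂ))) • Q1mat α ℓ
def B2pe : Matrix (Fin (ℓ+1)) (Fin (ℓ+1)) ℂ :=
  (-1 : ℂ) • Q0mat ℓ + (1 - 2 * (u : ℂ)) • Q1mat α ℓ
def B1e : Matrix (Fin (ℓ+1)) (Fin (ℓ+1)) ℂ := P0mat α β k ℓ + (u : ℂ) • P1mat α β k ℓ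

def zf : ℕ → ℂ := fun _ => 0
def natC : ℕ → ℂ := fun n => (n : ℂ)
def dAf : ℕ → ℂ := fun n => (β : ℂ) + 1 + 2 * n - (u : ℂ) * ((α : ℂ) + β + ℓ + n + 2)
def dVf : ℕ → ℂ := fun n => (n : ℂ) * ((α : ℂ) + β + n - k + 1)
def rVf : ℕ → ℂ := fun n => -(((ℓ : ℂ) - n) * ((n : ℂ) + β - k + 1))
def dB2f : ℕ → ℂ := fun n => (u : ℂ) * (1 - (u : ℂ)) * ((α : ℂ) - ℓ + 3 * n)
def lB2f : ℕ → ℂ := fun n => (1 - (u : ℂ)) * (3 * (n : ℂ))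
def dB2pf : ℕ → ℂ := fun n => (1 - 2 * (u : ℂ)) * ((α : ℂ) - ℓ + 3 * n)
def lB2pf : ℕ → ℂ := fun n => -(3 * (n : ℂ))
def dB1f : ℕ → ℂ := fun n =>
  ((α : ℂ) + 2 * ℓ) * ((β : ℂ) + 1 + 2 * n) - 3 * (k : ℂ) * ((ℓ : ℂ) - n)
    - 3 * (n : ℂ) * ((β : ℂ) - k + n)
    - (u : ℂ) * (((α : ℂ) - ℓ + 3 * n) * ((α : ℂ) + β + ℓ + n + 2))
def lB1f : ℕ → ℂ := fun n => -((n : ℂ) * (3 * n + 3 * (β : ℂ) - 3 * k + 3 + ℓ + 2 * α))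
def rB1f : ℕ → ℂ := fun n => (u : ℂ) * (3 * ((β : ℂ) - k + 1 + n) * ((ℓ : ℂ) - n))

lemma A1_tri : A1e α β ℓ u = Tri ℓ (dAf α β ℓ u) natC zf := by
  ext i j
  simp only [A1e, Cmat, Umat, Tri, DgM, LoM, UpM, dAf, natC, zf, Matrix.add_apply,
    Matrix.sub_apply, Matrix.smul_apply, Matrix.of_apply, smul_eq_mul]
  split_ifs <;> first | omega | (push_cast; ring)

lemma V_tri : Vmat α β k ℓ = Tri ℓ (dVf α β k) zf (rVf β k ℓ) := by
  ext i j
  simp only [Vmat, Tri, DgM, LoM, UpM, dVf, zf, rVf, Matrix.add_apply, Matrix.sub_apply,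
    Matrix.of_apply]
  split_ifs <;> first | omega | (push_cast; ring)

lemma B2_tri : B2e α ℓ u = Tri ℓ (dB2f α ℓ u) (lB2f u) zf := by
  ext i j
  simp only [B2e, Q0mat, Q1mat, Tri, DgM, LoM, UpM, dB2f, lB2f, zf, Matrix.add_apply,
    Matrix.smul_apply, Matrix.of_apply, smul_eq_mul]
  split_ifs <;> first | omega | (push_cast; ring)

lemma B2p_tri : B2pe α ℓ u = Tri ℓ (dB2pf α ℓ u) lB2pf zf := by
  ext i j
  simp only [B2pe, Q0mat, Q1mat, Tri, DgM, LoM, UpM, dB2pf, lB2pf, zf, Matrix.add_apply,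
    Matrix.smul_apply, Matrix.of_apply, smul_eq_mul]
  split_ifs <;> first | omega | (push_cast; ring)

lemma B1_tri : B1e α β k ℓ u = Tri ℓ (dB1f α β k ℓ u) (lB1f α β k ℓ) (rB1f β k ℓ u) := by
  ext i j
  simp only [B1e, P0mat, P1mat, Tri, DgM, LoM, UpM, dB1f, lB1f, rB1f, Matrix.add_apply,
    Matrix.sub_apply, Matrix.smul_apply, Matrix.of_apply, smul_eq_mul]
  split_ifs <;> first | omega | (push_cast; ring)

end Ident

section Ident2

variable (α β k : ℝ) (ℓ : ℕ) (u : ℝ)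

lemma U_tri : Umat α β ℓ = Tri ℓ (fun n => (α : ℂ) + β + ℓ + n + 2) zf zf := by
  ext i j
  simp only [Umat, Tri, DgM, LoM, UpM, zf, Matrix.add_apply, Matrix.of_apply]
  split_ifs <;> first | omega | (push_cast; ring)

lemma P1_tri : P1mat α β k ℓ = Tri ℓ (fun n => -(((α : ℂ) - ℓ + 3 * n) * ((α : ℂ) + β + ℓ + n + 2)))
    zf (fun n => 3 * ((β : ℂ) - k + 1 + n) * ((ℓ : ℂ) - n)) := by
  ext i j
  simp only [P1mat, Tri, DgM, LoM, UpM, zf, Matrix.add_apply, Matrix.of_apply]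
  split_ifs <;> first | omega | (push_cast; ring)

lemma Q1_tri : Q1mat α ℓ = Tri ℓ (fun n => (α : ℂ) - ℓ + 3 * n) zf zf := by
  ext i j
  simp only [Q1mat, Tri, DgM, LoM, UpM, zf, Matrix.add_apply, Matrix.of_apply]
  split_ifs <;> first | omega | (push_cast; ring)

lemma one_tri : (1 : Matrix (Fin (ℓ+1)) (Fin (ℓ+1)) ℂ) = Tri ℓ (fun _ => 1) zf zf := by
  ext i j
  simp only [Matrix.one_apply, Tri, DgM, LoM, UpM, zf, Matrix.add_apply, Matrix.of_apply,
    Fin.ext_iff]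
  split_ifs <;> first | omega | simp

lemma Tri_smul (z : ℂ) (d l r : ℕ → ℂ) :
    z • Tri ℓ d l r = Tri ℓ (fun n => z * d n) (fun n => z * l n) (fun n => z * r n) := by
  ext i j
  simp only [Tri, DgM, LoM, UpM, Matrix.add_apply, Matrix.of_apply, Matrix.smul_apply,
    smul_eq_mul]
  split_ifs <;> ring

lemma Tri_add (d1 l1 r1 d2 l2 r2 : ℕ → ℂ) :
    Tri ℓ d1 l1 r1 + Tri ℓ d2 l2 r2 =
      Tri ℓ (fun n => d1 n + d2 n) (fun n => l1 n + l2 n) (fun n => r1 n + r2 n) := by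
  ext i j
  simp only [Tri, DgM, LoM, UpM, Matrix.add_apply, Matrix.of_apply]
  split_ifs <;> ring

def T3mat : Matrix (Fin (ℓ+1)) (Fin (ℓ+1)) ℂ :=
  (2 * ((u : ℂ) * (1 - (u : ℂ)))) • B2pe α ℓ u + ((u : ℂ) * (1 - (u : ℂ))) • B1e α β k ℓ u
    + A1e α β ℓ u * B2e α ℓ u

def S3mat : Matrix (Fin (ℓ+1)) (Fin (ℓ+1)) ℂ :=
  (2 * (1 - 2 * (u : ℂ))) • B2e α ℓ u + ((u : ℂ) * (1 - (u : ℂ))) • B1e α β k ℓ u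
    + B2e α ℓ u * A1e α β ℓ u

def T2mat : Matrix (Fin (ℓ+1)) (Fin (ℓ+1)) ℂ :=
  ((u : ℂ) * (1 - (u : ℂ))) • ((-2 : ℂ) • Q1mat α ℓ + (2 : ℂ) • P1mat α β k ℓ
      + (-cC α k ℓ) • Vmat α β k ℓ)
    + A1e α β ℓ u * (B2pe α ℓ u + B1e α β k ℓ u)
    + (-1 : ℂ) • (Vmat α β k ℓ * B2e α ℓ u)

def S2mat : Matrix (Fin (ℓ+1)) (Fin (ℓ+1)) ℂ :=
  B2e α ℓ u * ((-2 : ℂ) • (1 : Matrix (Fin (ℓ+1)) (Fin (ℓ+1)) ℂ) + (-2 : ℂ) • Umat α β ℓ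
      + (-1 : ℂ) • Vmat α β k ℓ)
    + B1e α β k ℓ u * ((1 - 2 * (u : ℂ)) • (1 : Matrix (Fin (ℓ+1)) (Fin (ℓ+1)) ℂ)
      + A1e α β ℓ u)
    + (-(cC α k ℓ * ((u : ℂ) * (1 - (u : ℂ))))) • Vmat α β k ℓ

def T1mat : Matrix (Fin (ℓ+1)) (Fin (ℓ+1)) ℂ :=
  A1e α β ℓ u * (P1mat α β k ℓ + (-cC α k ℓ) • Vmat α β k ℓ)
    + (-1 : ℂ) • (Vmat α β k ℓ * B1e α β k ℓ u)

def S1mat : Matrix (Fin (ℓ+1)) (Fin (ℓ+1)) ℂ :=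
  B1e α β k ℓ u * ((-1 : ℂ) • Umat α β ℓ + (-1 : ℂ) • Vmat α β k ℓ)
    + (-cC α k ℓ) • (Vmat α β k ℓ * A1e α β ℓ u)

lemma J3 : T3mat α β k ℓ u = S3mat α β k ℓ u := by
  unfold T3mat S3mat
  rw [A1_tri, B2_tri, B2p_tri, B1_tri]
  simp only [Tri_smul, Tri_add]
  rw [Tri_mul, Tri_mul]
  · simp only [Tri_penta, Penta_smul, Penta_add]
    refine Penta_congr ℓ ?_ ?_ ?_ ?_ ?_ <;>
      (intro n hn; rcases n with _|m <;>
        (simp only [dAf, natC, zf, dVf, rVf, dB1f, lB1f, rB1f, dB2f, lB2f, dB2pf, lB2pf, cC,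
          Nat.zero_sub, Nat.add_sub_cancel]; try push_cast; try ring))
  all_goals simp [natC, zf, lB1f, lB2f, lB2pf, rVf, rB1f]

lemma J1 : T1mat α β k ℓ u = S1mat α β k ℓ u := by
  unfold T1mat S1mat
  rw [A1_tri, V_tri, B1_tri, P1_tri, U_tri]
  simp only [Tri_smul, Tri_add]
  rw [Tri_mul, Tri_mul, Tri_mul, Tri_mul]
  · simp only [Tri_penta, Penta_smul, Penta_add]
    refine Penta_congr ℓ ?_ ?_ ?_ ?_ ?_ <;>
      (intro n hn; rcases n with _|m <;>
        (simp only [dAf, natC, zf, dVf, rVf, dB1f, lB1f, rB1f, dB2f, lB2f, dB2pf, lB2pf, cC,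
          Nat.zero_sub, Nat.add_sub_cancel]; try push_cast; try ring))
  all_goals simp [natC, zf, lB1f, lB2f, lB2pf, rVf, rB1f]

lemma J2 : T2mat α β k ℓ u = S2mat α β k ℓ u := by
  unfold T2mat S2mat
  rw [A1_tri, V_tri, B1_tri, B2_tri, B2p_tri, P1_tri, Q1_tri, U_tri, one_tri]
  simp only [Tri_smul, Tri_add]
  rw [Tri_mul, Tri_mul, Tri_mul, Tri_mul]
  · simp only [Tri_penta, Penta_smul, Penta_add]
    refine Penta_congr ℓ ?_ ?_ ?_ ?_ ?_ <;>
      (intro n hn; rcases n with _|m <;>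
        (simp only [dAf, natC, zf, dVf, rVf, dB1f, lB1f, rB1f, dB2f, lB2f, dB2pf, lB2pf, cC,
          Nat.zero_sub, Nat.add_sub_cancel]; try push_cast; try ring))
  all_goals simp [natC, zf, lB1f, lB2f, lB2pf, rVf, rB1f]

end Ident2

section Calc

def Sm {d : ℕ} (G : ℝ → Matrix (Fin d) (Fin d) ℂ) : Prop :=
  ∀ i j, ContDiff ℝ (⊤ : ℕ∞) fun t => G t i j

lemma Sm.md {d : ℕ} {G : ℝ → Matrix (Fin d) (Fin d) ℂ} (hG : Sm G) : Sm (matDeriv G) :=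
  fun i j => (contDiff_infty_iff_deriv.mp (hG i j)).2

lemma Sm.dAt {d : ℕ} {G : ℝ → Matrix (Fin d) (Fin d) ℂ} (hG : Sm G) (u : ℝ) (i j : Fin d) :
    DifferentiableAt ℝ (fun t => G t i j) u :=
  ((hG i j).differentiable (by simp)).differentiableAt

def comb5 {d : ℕ} (q1 q2 q3 q4 q5 : ℝ → ℂ) (M1 M2 M3 M4 M5 : Matrix (Fin d) (Fin d) ℂ)
    (G1 G2 G3 G4 G5 : ℝ → Matrix (Fin d) (Fin d) ℂ) : ℝ → Matrix (Fin d) (Fin d) ℂ :=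
  fun t => q1 t • (M1 * G1 t) + q2 t • (M2 * G2 t) + q3 t • (M3 * G3 t) + q4 t • (M4 * G4 t)
    + q5 t • (M5 * G5 t)

lemma matDeriv_comb5 {d : ℕ} (q1 q2 q3 q4 q5 p1 p2 p3 p4 p5 : ℝ → ℂ)
    (h1 : ∀ t, HasDerivAt q1 (p1 t) t) (h2 : ∀ t, HasDerivAt q2 (p2 t) t)
    (h3 : ∀ t, HasDerivAt q3 (p3 t) t) (h4 : ∀ t, HasDerivAt q4 (p4 t) t)
    (h5 : ∀ t, HasDerivAt q5 (p5 t) t)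
    (M1 M2 M3 M4 M5 : Matrix (Fin d) (Fin d) ℂ)
    (G1 G2 G3 G4 G5 : ℝ → Matrix (Fin d) (Fin d) ℂ)
    (hG1 : Sm G1) (hG2 : Sm G2) (hG3 : Sm G3) (hG4 : Sm G4) (hG5 : Sm G5) (u : ℝ) :
    matDeriv (comb5 q1 q2 q3 q4 q5 M1 M2 M3 M4 M5 G1 G2 G3 G4 G5) u =
      comb5 p1 p2 p3 p4 p5 M1 M2 M3 M4 M5 G1 G2 G3 G4 G5 u +
        comb5 q1 q2 q3 q4 q5 M1 M2 M3 M4 M5 (matDeriv G1) (matDeriv G2) (matDeriv G3)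
          (matDeriv G4) (matDeriv G5) u := by
  ext i j
  simp only [matDeriv, comb5, Matrix.of_apply, Matrix.add_apply, Matrix.smul_apply,
    Matrix.mul_apply, smul_eq_mul]
  have S1 : HasDerivAt (fun t => ∑ x, M1 i x * G1 t x j)
      (∑ x, M1 i x * deriv (fun s => G1 s x j) u) u :=
    HasDerivAt.fun_sum fun x _ => ((hG1.dAt u x j).hasDerivAt).const_mul (M1 i x)
  have S2 : HasDerivAt (fun t => ∑ x, M2 i x * G2 t x j)
      (∑ x, M2 i x * deriv (fun s => G2 s x j) u) u :=
    HasDerivAt.fun_sum fun x _ => ((hG2.dAt u x j).hasDerivAt).const_mul (M2 i x)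
  have S3 : HasDerivAt (fun t => ∑ x, M3 i x * G3 t x j)
      (∑ x, M3 i x * deriv (fun s => G3 s x j) u) u :=
    HasDerivAt.fun_sum fun x _ => ((hG3.dAt u x j).hasDerivAt).const_mul (M3 i x)
  have S4 : HasDerivAt (fun t => ∑ x, M4 i x * G4 t x j)
      (∑ x, M4 i x * deriv (fun s => G4 s x j) u) u :=
    HasDerivAt.fun_sum fun x _ => ((hG4.dAt u x j).hasDerivAt).const_mul (M4 i x)
  have S5 : HasDerivAt (fun t => ∑ x, M5 i x * G5 t x j)
      (∑ x, M5 i x * deriv (fun s => G5 s x j) u) u :=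
    HasDerivAt.fun_sum fun x _ => ((hG5.dAt u x j).hasDerivAt).const_mul (M5 i x)
  have key := (((((h1 u).mul S1).add ((h2 u).mul S2)).add ((h3 u).mul S3)).add
    ((h4 u).mul S4)).add ((h5 u).mul S5)
  refine key.deriv.trans ?_
  beta_reduce
  ring

lemma matDeriv_comb5_add {d : ℕ} (q1 q2 q3 q4 q5 p1 p2 p3 p4 p5 : ℝ → ℂ)
    (r1 r2 r3 r4 r5 s1 s2 s3 s4 s5 : ℝ → ℂ)
    (h1 : ∀ t, HasDerivAt q1 (p1 t) t) (h2 : ∀ t, HasDerivAt q2 (p2 t) t)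
    (h3 : ∀ t, HasDerivAt q3 (p3 t) t) (h4 : ∀ t, HasDerivAt q4 (p4 t) t)
    (h5 : ∀ t, HasDerivAt q5 (p5 t) t)
    (g1 : ∀ t, HasDerivAt r1 (s1 t) t) (g2 : ∀ t, HasDerivAt r2 (s2 t) t)
    (g3 : ∀ t, HasDerivAt r3 (s3 t) t) (g4 : ∀ t, HasDerivAt r4 (s4 t) t)
    (g5 : ∀ t, HasDerivAt r5 (s5 t) t)
    (M1 M2 M3 M4 M5 N1 N2 N3 N4 N5 : Matrix (Fin d) (Fin d) ℂ)
    (G1 G2 G3 G4 G5 H1 H2 H3 H4 H5 : ℝ → Matrix (Fin d) (Fin d) ℂ)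
    (hG1 : Sm G1) (hG2 : Sm G2) (hG3 : Sm G3) (hG4 : Sm G4) (hG5 : Sm G5)
    (hH1 : Sm H1) (hH2 : Sm H2) (hH3 : Sm H3) (hH4 : Sm H4) (hH5 : Sm H5) (u : ℝ) :
    matDeriv (fun t => comb5 q1 q2 q3 q4 q5 M1 M2 M3 M4 M5 G1 G2 G3 G4 G5 t
        + comb5 r1 r2 r3 r4 r5 N1 N2 N3 N4 N5 H1 H2 H3 H4 H5 t) u =
      (comb5 p1 p2 p3 p4 p5 M1 M2 M3 M4 M5 G1 G2 G3 G4 G5 u +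
        comb5 q1 q2 q3 q4 q5 M1 M2 M3 M4 M5 (matDeriv G1) (matDeriv G2) (matDeriv G3)
          (matDeriv G4) (matDeriv G5) u) +
      (comb5 s1 s2 s3 s4 s5 N1 N2 N3 N4 N5 H1 H2 H3 H4 H5 u +
        comb5 r1 r2 r3 r4 r5 N1 N2 N3 N4 N5 (matDeriv H1) (matDeriv H2) (matDeriv H3)
          (matDeriv H4) (matDeriv H5) u) := by
  ext i j
  simp only [matDeriv, comb5, Matrix.of_apply, Matrix.add_apply, Matrix.smul_apply,
    Matrix.mul_apply, smul_eq_mul]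
  have S1 : HasDerivAt (fun t => ∑ x, M1 i x * G1 t x j)
      (∑ x, M1 i x * deriv (fun s => G1 s x j) u) u :=
    HasDerivAt.fun_sum fun x _ => ((hG1.dAt u x j).hasDerivAt).const_mul (M1 i x)
  have S2 : HasDerivAt (fun t => ∑ x, M2 i x * G2 t x j)
      (∑ x, M2 i x * deriv (fun s => G2 s x j) u) u :=
    HasDerivAt.fun_sum fun x _ => ((hG2.dAt u x j).hasDerivAt).const_mul (M2 i x)
  have S3 : HasDerivAt (fun t => ∑ x, M3 i x * G3 t x j)
      (∑ x, M3 i x * deriv (fun s => G3 s x j) u) u :=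
    HasDerivAt.fun_sum fun x _ => ((hG3.dAt u x j).hasDerivAt).const_mul (M3 i x)
  have S4 : HasDerivAt (fun t => ∑ x, M4 i x * G4 t x j)
      (∑ x, M4 i x * deriv (fun s => G4 s x j) u) u :=
    HasDerivAt.fun_sum fun x _ => ((hG4.dAt u x j).hasDerivAt).const_mul (M4 i x)
  have S5 : HasDerivAt (fun t => ∑ x, M5 i x * G5 t x j)
      (∑ x, M5 i x * deriv (fun s => G5 s x j) u) u :=
    HasDerivAt.fun_sum fun x _ => ((hG5.dAt u x j).hasDerivAt).const_mul (M5 i x)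
  have T1 : HasDerivAt (fun t => ∑ x, N1 i x * H1 t x j)
      (∑ x, N1 i x * deriv (fun s => H1 s x j) u) u :=
    HasDerivAt.fun_sum fun x _ => ((hH1.dAt u x j).hasDerivAt).const_mul (N1 i x)
  have T2 : HasDerivAt (fun t => ∑ x, N2 i x * H2 t x j)
      (∑ x, N2 i x * deriv (fun s => H2 s x j) u) u :=
    HasDerivAt.fun_sum fun x _ => ((hH2.dAt u x j).hasDerivAt).const_mul (N2 i x)
  have T3 : HasDerivAt (fun t => ∑ x, N3 i x * H3 t x j)
      (∑ x, N3 i x * deriv (fun s => H3 s x j) u) u :=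
    HasDerivAt.fun_sum fun x _ => ((hH3.dAt u x j).hasDerivAt).const_mul (N3 i x)
  have T4 : HasDerivAt (fun t => ∑ x, N4 i x * H4 t x j)
      (∑ x, N4 i x * deriv (fun s => H4 s x j) u) u :=
    HasDerivAt.fun_sum fun x _ => ((hH4.dAt u x j).hasDerivAt).const_mul (N4 i x)
  have T5 : HasDerivAt (fun t => ∑ x, N5 i x * H5 t x j)
      (∑ x, N5 i x * deriv (fun s => H5 s x j) u) u :=
    HasDerivAt.fun_sum fun x _ => ((hH5.dAt u x j).hasDerivAt).const_mul (N5 i x)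
  have keyL := (((((h1 u).mul S1).add ((h2 u).mul S2)).add ((h3 u).mul S3)).add
    ((h4 u).mul S4)).add ((h5 u).mul S5)
  have keyR := (((((g1 u).mul T1).add ((g2 u).mul T2)).add ((g3 u).mul T3)).add
    ((g4 u).mul T4)).add ((g5 u).mul T5)
  have key := keyL.add keyR
  refine key.deriv.trans ?_
  beta_reduce
  ring

def q1f : ℝ → ℂ := fun t => 1 - (t : ℂ)
def qtf : ℝ → ℂ := fun t => (t : ℂ)
def qbf : ℝ → ℂ := fun t => (t : ℂ) * (1 - (t : ℂ))
def qbpf : ℝ → ℂ := fun t => 1 - 2 * (t : ℂ)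
def qmtf : ℝ → ℂ := fun t => -(t : ℂ)
def qcf (z : ℂ) : ℝ → ℂ := fun _ => z

lemma hd_qtf : ∀ t, HasDerivAt qtf (qcf 1 t) t := by
  intro t
  exact Complex.ofRealCLM.hasDerivAt

lemma hd_q1f : ∀ t, HasDerivAt q1f (qcf (-1) t) t := by
  intro t
  exact (hd_qtf t).const_sub 1

lemma hd_qmtf : ∀ t, HasDerivAt qmtf (qcf (-1) t) t := by
  intro t
  exact (hd_qtf t).neg

lemma hd_qbf : ∀ t, HasDerivAt qbf (qbpf t) t := by
  intro t
  have := (hd_qtf t).mul (hd_q1f t)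
  exact this.congr_deriv (by show (1:ℂ) * (1 - (t:ℂ)) + (t:ℂ) * (-1) = 1 - 2 * (t:ℂ); ring)

lemma hd_qbpf : ∀ t, HasDerivAt qbpf (qcf (-2) t) t := by
  intro t
  have := ((hd_qtf t).const_mul (2 : ℂ)).const_sub 1
  exact this.congr_deriv (by show -(2 * (1:ℂ)) = -2; ring)

lemma hd_qcf (z : ℂ) : ∀ t, HasDerivAt (qcf z) (qcf 0 t) t := by
  intro t
  exact hasDerivAt_const t z

end Calc

section Assemble

variable (α β k : ℝ) (ℓ : ℕ)

def T4mat (u : ℝ) : Matrix (Fin (ℓ+1)) (Fin (ℓ+1)) ℂ := ((u : ℂ) * (1 - (u : ℂ))) • B2e α ℓ u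

def T0mat : Matrix (Fin (ℓ+1)) (Fin (ℓ+1)) ℂ := cC α k ℓ • (Vmat α β k ℓ * Vmat α β k ℓ)

lemma Eop_eq (F : ℝ → Matrix (Fin (ℓ+1)) (Fin (ℓ+1)) ℂ) :
    Eop α β k ℓ F = comb5 q1f qbf (qcf 1) qtf (qcf (-(cC α k ℓ)))
      (Q0mat ℓ) (Q1mat α ℓ) (P0mat α β k ℓ) (P1mat α β k ℓ) (Vmat α β k ℓ)
      (matDeriv (matDeriv F)) (matDeriv (matDeriv F)) (matDeriv F) (matDeriv F) F := by
  funext t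
  simp only [Eop, comb5, q1f, qbf, qcf, qtf, cC]
  push_cast
  simp only [Matrix.add_mul, Matrix.smul_mul, Matrix.mul_add, Matrix.mul_smul, smul_add,
    smul_smul, Matrix.one_mul]
  module

lemma Dop_eq (F : ℝ → Matrix (Fin (ℓ+1)) (Fin (ℓ+1)) ℂ) :
    Dop α β k ℓ F = comb5 qbf (qcf 1) qmtf (qcf (-1)) (qcf 0)
      1 (Cmat β ℓ) (Umat α β ℓ) (Vmat α β k ℓ) 1
      (matDeriv (matDeriv F)) (matDeriv F) (matDeriv F) F F := by
  funext t
  simp only [Dop, comb5, qbf, qcf, qmtf]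
  push_cast
  simp only [Matrix.sub_mul, Matrix.smul_mul, Matrix.one_mul]
  module

lemma hE1 (F : ℝ → Matrix (Fin (ℓ+1)) (Fin (ℓ+1)) ℂ) (hF : Sm F) :
    matDeriv (Eop α β k ℓ F) = fun u =>
      comb5 (qcf (-1)) qbpf (qcf 0) (qcf 1) (qcf 0)
        (Q0mat ℓ) (Q1mat α ℓ) (P0mat α β k ℓ) (P1mat α β k ℓ) (Vmat α β k ℓ)
        (matDeriv (matDeriv F)) (matDeriv (matDeriv F)) (matDeriv F) (matDeriv F) F u
      + comb5 q1f qbf (qcf 1) qtf (qcf (-(cC α k ℓ)))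
        (Q0mat ℓ) (Q1mat α ℓ) (P0mat α β k ℓ) (P1mat α β k ℓ) (Vmat α β k ℓ)
        (matDeriv (matDeriv (matDeriv F))) (matDeriv (matDeriv (matDeriv F)))
        (matDeriv (matDeriv F)) (matDeriv (matDeriv F)) (matDeriv F) u := by
  rw [Eop_eq]
  funext u
  exact matDeriv_comb5 _ _ _ _ _ _ _ _ _ _ hd_q1f hd_qbf (hd_qcf 1) hd_qtf (hd_qcf _)
    _ _ _ _ _ _ _ _ _ _ hF.md.md hF.md.md hF.md hF.md hF u

lemma hE2 (F : ℝ → Matrix (Fin (ℓ+1)) (Fin (ℓ+1)) ℂ) (hF : Sm F) (u : ℝ) :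
    matDeriv (matDeriv (Eop α β k ℓ F)) u =
      (comb5 (qcf 0) (qcf (-2)) (qcf 0) (qcf 0) (qcf 0)
        (Q0mat ℓ) (Q1mat α ℓ) (P0mat α β k ℓ) (P1mat α β k ℓ) (Vmat α β k ℓ)
        (matDeriv (matDeriv F)) (matDeriv (matDeriv F)) (matDeriv F) (matDeriv F) F u
      + comb5 (qcf (-1)) qbpf (qcf 0) (qcf 1) (qcf 0)
        (Q0mat ℓ) (Q1mat α ℓ) (P0mat α β k ℓ) (P1mat α β k ℓ) (Vmat α β k ℓ)
        (matDeriv (matDeriv (matDeriv F))) (matDeriv (matDeriv (matDeriv F)))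
        (matDeriv (matDeriv F)) (matDeriv (matDeriv F)) (matDeriv F) u)
      + (comb5 (qcf (-1)) qbpf (qcf 0) (qcf 1) (qcf 0)
        (Q0mat ℓ) (Q1mat α ℓ) (P0mat α β k ℓ) (P1mat α β k ℓ) (Vmat α β k ℓ)
        (matDeriv (matDeriv (matDeriv F))) (matDeriv (matDeriv (matDeriv F)))
        (matDeriv (matDeriv F)) (matDeriv (matDeriv F)) (matDeriv F) u
      + comb5 q1f qbf (qcf 1) qtf (qcf (-(cC α k ℓ)))
        (Q0mat ℓ) (Q1mat α ℓ) (P0mat α β k ℓ) (P1mat α β k ℓ) (Vmat α β k ℓ)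
        (matDeriv (matDeriv (matDeriv (matDeriv F)))) (matDeriv (matDeriv (matDeriv (matDeriv F))))
        (matDeriv (matDeriv (matDeriv F))) (matDeriv (matDeriv (matDeriv F)))
        (matDeriv (matDeriv F)) u) := by
  rw [hE1 α β k ℓ F hF]
  exact matDeriv_comb5_add _ _ _ _ _ _ _ _ _ _ _ _ _ _ _ _ _ _ _ _
    (hd_qcf _) hd_qbpf (hd_qcf _) (hd_qcf _) (hd_qcf _)
    hd_q1f hd_qbf (hd_qcf _) hd_qtf (hd_qcf _)
    _ _ _ _ _ _ _ _ _ _ _ _ _ _ _ _ _ _ _ _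
    hF.md.md hF.md.md hF.md hF.md hF
    hF.md.md.md hF.md.md.md hF.md.md hF.md.md hF.md u

end Assemble

section Assemble2

variable (α β k : ℝ) (ℓ : ℕ)

lemma hD1 (F : ℝ → Matrix (Fin (ℓ+1)) (Fin (ℓ+1)) ℂ) (hF : Sm F) :
    matDeriv (Dop α β k ℓ F) = fun u =>
      comb5 qbpf (qcf 0) (qcf (-1)) (qcf 0) (qcf 0)
        1 (Cmat β ℓ) (Umat α β ℓ) (Vmat α β k ℓ) 1
        (matDeriv (matDeriv F)) (matDeriv F) (matDeriv F) F F u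
      + comb5 qbf (qcf 1) qmtf (qcf (-1)) (qcf 0)
        1 (Cmat β ℓ) (Umat α β ℓ) (Vmat α β k ℓ) 1
        (matDeriv (matDeriv (matDeriv F))) (matDeriv (matDeriv F)) (matDeriv (matDeriv F))
        (matDeriv F) (matDeriv F) u := by
  rw [Dop_eq]
  funext u
  exact matDeriv_comb5 _ _ _ _ _ _ _ _ _ _ hd_qbf (hd_qcf 1) hd_qmtf (hd_qcf _) (hd_qcf _)
    _ _ _ _ _ _ _ _ _ _ hF.md.md hF.md hF.md hF hF u

lemma hD2 (F : ℝ → Matrix (Fin (ℓ+1)) (Fin (ℓ+1)) ℂ) (hF : Sm F) (u : ℝ) :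
    matDeriv (matDeriv (Dop α β k ℓ F)) u =
      (comb5 (qcf (-2)) (qcf 0) (qcf 0) (qcf 0) (qcf 0)
        1 (Cmat β ℓ) (Umat α β ℓ) (Vmat α β k ℓ) 1
        (matDeriv (matDeriv F)) (matDeriv F) (matDeriv F) F F u
      + comb5 qbpf (qcf 0) (qcf (-1)) (qcf 0) (qcf 0)
        1 (Cmat β ℓ) (Umat α β ℓ) (Vmat α β k ℓ) 1
        (matDeriv (matDeriv (matDeriv F))) (matDeriv (matDeriv F)) (matDeriv (matDeriv F))
        (matDeriv F) (matDeriv F) u)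
      + (comb5 qbpf (qcf 0) (qcf (-1)) (qcf 0) (qcf 0)
        1 (Cmat β ℓ) (Umat α β ℓ) (Vmat α β k ℓ) 1
        (matDeriv (matDeriv (matDeriv F))) (matDeriv (matDeriv F)) (matDeriv (matDeriv F))
        (matDeriv F) (matDeriv F) u
      + comb5 qbf (qcf 1) qmtf (qcf (-1)) (qcf 0)
        1 (Cmat β ℓ) (Umat α β ℓ) (Vmat α β k ℓ) 1
        (matDeriv (matDeriv (matDeriv (matDeriv F)))) (matDeriv (matDeriv (matDeriv F)))
        (matDeriv (matDeriv (matDeriv F))) (matDeriv (matDeriv F)) (matDeriv (matDeriv F)) u) := by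
  rw [hD1 α β k ℓ F hF]
  exact matDeriv_comb5_add _ _ _ _ _ _ _ _ _ _ _ _ _ _ _ _ _ _ _ _
    hd_qbpf (hd_qcf _) (hd_qcf _) (hd_qcf _) (hd_qcf _)
    hd_qbf (hd_qcf _) hd_qmtf (hd_qcf _) (hd_qcf _)
    _ _ _ _ _ _ _ _ _ _ _ _ _ _ _ _ _ _ _ _
    hF.md.md hF.md hF.md hF hF
    hF.md.md.md hF.md.md hF.md.md hF.md hF.md u

lemma DE_canon (F : ℝ → Matrix (Fin (ℓ+1)) (Fin (ℓ+1)) ℂ) (hF : Sm F) (u : ℝ) :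
    Dop α β k ℓ (Eop α β k ℓ F) u =
      T4mat α ℓ u * matDeriv (matDeriv (matDeriv (matDeriv F))) u
        + T3mat α β k ℓ u * matDeriv (matDeriv (matDeriv F)) u
        + T2mat α β k ℓ u * matDeriv (matDeriv F) u
        + T1mat α β k ℓ u * matDeriv F u
        + T0mat α β k ℓ * F u := by
  simp only [Dop]
  rw [hE2 α β k ℓ F hF u, hE1 α β k ℓ F hF, Eop_eq α β k ℓ F]
  beta_reduce
  simp only [comb5, T4mat, T3mat, T2mat, T1mat, T0mat, A1e, B2e, B2pe, B1e, cC, q1f, qbf,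
    qbpf, qtf, qmtf, qcf]
  push_cast
  simp only [Matrix.add_mul, Matrix.sub_mul, Matrix.smul_mul, Matrix.mul_add, Matrix.mul_smul,
    Matrix.mul_sub, smul_add, smul_smul, smul_sub, Matrix.mul_assoc, Matrix.one_mul,
    Matrix.mul_one]
  module

lemma ED_canon (F : ℝ → Matrix (Fin (ℓ+1)) (Fin (ℓ+1)) ℂ) (hF : Sm F) (u : ℝ) :
    Eop α β k ℓ (Dop α β k ℓ F) u =
      T4mat α ℓ u * matDeriv (matDeriv (matDeriv (matDeriv F))) u
        + S3mat α β k ℓ u * matDeriv (matDeriv (matDeriv F)) u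
        + S2mat α β k ℓ u * matDeriv (matDeriv F) u
        + S1mat α β k ℓ u * matDeriv F u
        + T0mat α β k ℓ * F u := by
  simp only [Eop]
  rw [hD2 α β k ℓ F hF u, hD1 α β k ℓ F hF, Dop_eq α β k ℓ F]
  beta_reduce
  simp only [comb5, T4mat, S3mat, S2mat, S1mat, T0mat, A1e, B2e, B2pe, B1e, cC, q1f, qbf,
    qbpf, qtf, qmtf, qcf]
  push_cast
  simp only [Matrix.add_mul, Matrix.sub_mul, Matrix.smul_mul, Matrix.mul_add, Matrix.mul_smul,
    Matrix.mul_sub, smul_add, smul_smul, smul_sub, Matrix.mul_assoc, Matrix.one_mul,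
    Matrix.mul_one]
  module

end Assemble2

/-- The differential operators `D` and `E` commute: for every smooth matrix-valued
function `F` and every `u ∈ ℝ`, `D(EF)(u) = E(DF)(u)`. -/
theorem D_E_commute (α β k : ℝ) (ℓ : ℕ) (hα : -1 < α) (hβ : -1 < β)
    (hk0 : 0 < k) (hk1 : k < β + 1) (hℓ : 0 < ℓ)
    (F : ℝ → Matrix (Fin (ℓ+1)) (Fin (ℓ+1)) ℂ)
    (hF : ∀ i j, ContDiff ℝ (⊤ : ℕ∞) fun t => F t i j) (u : ℝ) :
    Dop α β k ℓ (Eop α β k ℓ F) u = Eop α β k ℓ (Dop α β k ℓ F) u := by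
  have hsm : Sm F := fun i j => (hF i j).of_le (by simp)
  rw [DE_canon α β k ℓ F hsm u, ED_canon α β k ℓ F hsm u, J3, J2, J1]
end
end

section
/- Suppose λ_j(w) = λ_{j'}(w') for some w, w' ∈ ℕ₀ and integers 0 ≤ j, j' ≤ ℓ. Then w = w' if and only if j = j'. -/
noncomputable section

/-- The eigenvalue `λ_j(w) = −w(w+α+β+ℓ+j+1) − j(α+β−k+1+j)`. -/
def lamEig (α β k : ℝ) (ℓ : ℕ) (w j : ℕ) : ℝ :=
  -((w : ℝ) * ((w : ℝ) + α + β + ℓ + j + 1)) - (j : ℝ) * (α + β - k + 1 + (j : ℝ))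

/-- If `λ_j(w) = λ_{j'}(w')` for some `w, w' ∈ ℕ₀` and `0 ≤ j, j' ≤ ℓ`, then
`w = w'` if and only if `j = j'`. -/
theorem lam_eq_w_iff_j (α β k : ℝ) (ℓ : ℕ) (hα : -1 < α) (hβ : -1 < β)
    (hk0 : 0 < k) (hk1 : k < β + 1) (hℓ : 0 < ℓ)
    (w w' j j' : ℕ) (hj : j ≤ ℓ) (hj' : j' ≤ ℓ)
    (h : lamEig α β k ℓ w j = lamEig α β k ℓ w' j') :
    w = w' ↔ j = j' := by
  unfold lamEig at h
  constructor
  · rintro rfl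
    by_contra hne
    have h1 : ((j : ℝ) - j') ≠ 0 := by
      intro hc
      exact hne (Nat.cast_injective (by linarith [sub_eq_zero.mp hc] : (j : ℝ) = j'))
    have h2 : (1 : ℕ) ≤ j + j' := by omega
    have h2' : (1 : ℝ) ≤ (j : ℝ) + j' := by exact_mod_cast h2
    have h3 : (w : ℝ) + (α + β - k + 1) + j + j' > 0 := by
      have hw : (0 : ℝ) ≤ (w : ℝ) := Nat.cast_nonneg w
      linarith
    have key : ((j : ℝ) - j') * ((w : ℝ) + (α + β - k + 1) + j + j') = 0 := by
      linear_combination -h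
    rcases mul_eq_zero.mp key with hc | hc
    · exact h1 hc
    · linarith
  · rintro rfl
    have h3 : (w : ℝ) + w' + α + β + ℓ + j + 1 > 0 := by
      have hw : (0 : ℝ) ≤ (w : ℝ) := Nat.cast_nonneg w
      have hw' : (0 : ℝ) ≤ (w' : ℝ) := Nat.cast_nonneg w'
      have hj0 : (0 : ℝ) ≤ (j : ℝ) := Nat.cast_nonneg j
      have hℓ' : (1 : ℝ) ≤ (ℓ : ℝ) := by exact_mod_cast hℓ
      linarith
    have key : ((w : ℝ) - w') * ((w : ℝ) + w' + α + β + ℓ + j + 1) = 0 := by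
      linear_combination -h
    rcases mul_eq_zero.mp key with hc | hc
    · exact Nat.cast_injective (by linarith [sub_eq_zero.mp hc] : (w : ℝ) = w')
    · linarith
end
end

section
/- Suppose λ_j(w) = λ_{j'}(w') for some w, w' ∈ ℕ₀ and integers 0 ≤ j, j' ≤ ℓ. If w' > w, then j > j' + 1. -/
noncomputable section

/-- If `λ_j(w) = λ_{j'}(w')` for some `w, w' ∈ ℕ₀` and `0 ≤ j, j' ≤ ℓ`, and `w' > w`,
then `j > j' + 1`. -/
theorem lam_eq_of_lt (α β k : ℝ) (ℓ : ℕ) (hα : -1 < α) (hβ : -1 < β)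
    (hk0 : 0 < k) (hk1 : k < β + 1) (hℓ : 0 < ℓ)
    (w w' j j' : ℕ) (hj : j ≤ ℓ) (hj' : j' ≤ ℓ)
    (h : lamEig α β k ℓ w j = lamEig α β k ℓ w' j') (hww : w < w') :
    j' + 1 < j := by
  by_contra hcon
  push_neg at hcon
  unfold lamEig at h
  have hw : (w : ℝ) + 1 ≤ (w' : ℝ) := by exact_mod_cast hww
  have hw0 : (0 : ℝ) ≤ (w : ℝ) := Nat.cast_nonneg w
  have hj0 : (0 : ℝ) ≤ (j : ℝ) := Nat.cast_nonneg j
  have hj'0 : (0 : ℝ) ≤ (j' : ℝ) := Nat.cast_nonneg j'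
  have hjl : (j : ℝ) ≤ (ℓ : ℝ) := by exact_mod_cast hj
  have hj'l : (j' : ℝ) ≤ (ℓ : ℝ) := by exact_mod_cast hj'
  have hl1 : (1 : ℝ) ≤ (ℓ : ℝ) := by exact_mod_cast hℓ
  rcases lt_or_eq_of_le hcon with hlt | heq
  · -- j ≤ j'
    have hjj' : (j : ℝ) ≤ (j' : ℝ) := by
      have : j ≤ j' := Nat.lt_succ_iff.mp hlt
      exact_mod_cast this
    nlinarith [mul_nonneg (sub_nonneg.2 hjj') (by linarith : (0:ℝ) ≤ (j:ℝ) + (j':ℝ) + α + 1),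
      mul_nonneg (sub_nonneg.2 hw) (by linarith : (0:ℝ) ≤ (w:ℝ) + (w':ℝ) + α + β + ℓ + 1),
      mul_nonneg (sub_nonneg.2 hjj') (by linarith : (0:ℝ) ≤ (w':ℝ))]
  · -- j = j' + 1
    have hje : (j : ℝ) = (j' : ℝ) + 1 := by exact_mod_cast heq

    nlinarith [mul_nonneg (sub_nonneg.2 hw) (by linarith : (0:ℝ) ≤ (w:ℝ) + (w':ℝ) + (j':ℝ) + α + β + ℓ)]
end
end

section
/- Fix w ∈ ℕ₀ and an integer 0 ≤ j ≤ ℓ, and let M_{w,j} = Σ_{i=0}^ℓ (i−j)(α+β−k+1+i+j+w)E_{ii} − Σ_{i=0}^{ℓ−1} (ℓ−i)(β−k+1+i)E_{i,i+1}. Then the kernel of M_{w,j} is one-dimensional, spanned by the vector x = (x₀,…,x_ℓ) ∈ ℂ^{ℓ+1} with x_i = (−1)^{i+j}·binom(ℓ−i, ℓ−j)·(β−k+1+i)_{j−i}/(α+β+j+i+w−k+1)_{j−i} for 0 ≤ i ≤ j−1, x_j = 1, and x_i = 0 for j < i ≤ ℓ. -/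
open Matrix

noncomputable section

/-- Pochhammer symbol `(z)_r = z(z+1)⋯(z+r−1)`, with `(z)₀ = 1`. -/
def poch (z : ℝ) (r : ℕ) : ℝ := ∏ t ∈ Finset.range r, (z + t)

/-- The matrix `M_{w,j} = Σ_i (i−j)(α+β−k+1+i+j+w)E_{ii} − Σ_i (ℓ−i)(β−k+1+i)E_{i,i+1}`. -/
def Mwj (α β k : ℝ) (ℓ : ℕ) (w : ℕ) (j : Fin (ℓ+1)) :
    Matrix (Fin (ℓ+1)) (Fin (ℓ+1)) ℂ :=
  Matrix.of fun i i' =>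
    (if (i : ℕ) = (i' : ℕ) then
        (((i : ℕ) : ℂ) - ((j : ℕ) : ℂ)) * ((α : ℂ) + β - k + 1 + (i : ℕ) + (j : ℕ) + w)
      else 0)
      - (if (i' : ℕ) = (i : ℕ) + 1 then
          ((ℓ : ℂ) - (i : ℕ)) * ((β : ℂ) - k + 1 + (i : ℕ))
        else 0)

/-- The vector `x` with `x_i = (−1)^{i+j} binom(ℓ−i,ℓ−j) (β−k+1+i)_{j−i}/(α+β+j+i+w−k+1)_{j−i}`
for `i < j`, `x_j = 1` and `x_i = 0` for `i > j`. -/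
def xker (α β k : ℝ) (ℓ : ℕ) (w : ℕ) (j : Fin (ℓ+1)) : Fin (ℓ+1) → ℂ := fun i =>
  if (i : ℕ) < (j : ℕ) then
    ((((-1 : ℝ) ^ ((i : ℕ) + (j : ℕ)) * (Nat.choose (ℓ - (i : ℕ)) (ℓ - (j : ℕ)))
        * poch (β - k + 1 + (i : ℕ)) ((j : ℕ) - (i : ℕ))
        / poch (α + β + (j : ℕ) + (i : ℕ) + (w : ℝ) - k + 1) ((j : ℕ) - (i : ℕ)) : ℝ)) : ℂ)
  else if (i : ℕ) = (j : ℕ) then 1 else 0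

lemma poch_succ (z : ℝ) (r : ℕ) : poch z (r+1) = z * poch (z+1) r := by
  rw [poch, poch, Finset.prod_range_succ', mul_comm]
  congr 1
  · push_cast; ring
  · exact Finset.prod_congr rfl fun t _ => by push_cast; ring

lemma poch_pos {z : ℝ} (hz : 0 < z) (r : ℕ) : 0 < poch z r :=
  Finset.prod_pos fun t _ => by positivity

lemma choose_id {i j ℓ : ℕ} (hij : i < j) (hj : j ≤ ℓ) :
    (j - i) * Nat.choose (ℓ - i) (ℓ - j) = (ℓ - i) * Nat.choose (ℓ - i - 1) (ℓ - j) := by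
  obtain ⟨m, rfl⟩ : ∃ m, j = i + m + 1 := ⟨j - i - 1, by omega⟩
  obtain ⟨n, hn⟩ : ∃ n, ℓ - i = n + 1 := ⟨ℓ - i - 1, by omega⟩
  have h1 : ℓ - (i + m + 1) = n - m := by omega
  have h3 : i + m + 1 - i = m + 1 := by omega
  have hmn : m ≤ n := by omega
  rw [hn, h1, h3]
  simp only [Nat.add_sub_cancel]
  rw [Nat.choose_symm hmn]
  have h4 : n + 1 - (m + 1) = n - m := by omega
  rw [← h4, Nat.choose_symm (show m + 1 ≤ n + 1 by omega), mul_comm]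
  exact (Nat.add_one_mul_choose_eq n m).symm

/-- The real-valued formula for the kernel vector entries. -/
noncomputable def xR (α β k : ℝ) (ℓ w i j : ℕ) : ℝ :=
  (-1 : ℝ) ^ (i + j) * (Nat.choose (ℓ - i) (ℓ - j))
    * poch (β - k + 1 + i) (j - i)
    / poch (α + β + j + i + (w : ℝ) - k + 1) (j - i)

lemma recurR (α β k : ℝ) (hα : -1 < α) (hk1 : k < β + 1) (ℓ w i j : ℕ)
    (hij : i < j) (hjl : j ≤ ℓ) :
    ((i : ℝ) - j) * (α + β - k + 1 + i + j + w) * xR α β k ℓ w i j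
      = ((ℓ : ℝ) - i) * (β - k + 1 + i) * xR α β k ℓ w (i+1) j := by
  obtain ⟨m, rfl⟩ : ∃ m, j = i + m + 1 := ⟨j - i - 1, by omega⟩
  have h1 : i + m + 1 - i = m + 1 := by omega
  have h2 : i + m + 1 - (i + 1) = m := by omega
  have hz : (0:ℝ) < α + β + (i + m + 1 : ℕ) + i + (w : ℝ) - k + 1 := by
    push_cast; nlinarith [Nat.cast_nonneg (α := ℝ) i, Nat.cast_nonneg (α := ℝ) m,
      Nat.cast_nonneg (α := ℝ) w]
  rw [xR, xR, h1, h2]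
  rw [poch_succ, poch_succ]
  have e1 : (β - k + 1 + ((i+1 : ℕ) : ℝ)) = (β - k + 1 + i) + 1 := by push_cast; ring
  have e2 : (α + β + ((i + m + 1 : ℕ) : ℝ) + ((i+1 : ℕ) : ℝ) + (w : ℝ) - k + 1)
      = (α + β + ((i + m + 1 : ℕ) : ℝ) + i + (w : ℝ) - k + 1) + 1 := by push_cast; ring
  rw [e1, e2]
  have hQ : (0:ℝ) < poch ((α + β + ((i + m + 1 : ℕ) : ℝ) + i + (w : ℝ) - k + 1) + 1) m :=
    poch_pos (by linarith) m
  have hch : ((m : ℝ) + 1) * (Nat.choose (ℓ - i) (ℓ - (i + m + 1)))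
      = ((ℓ : ℝ) - i) * (Nat.choose (ℓ - (i+1)) (ℓ - (i + m + 1))) := by
    have hid := choose_id (i := i) (j := i + m + 1) (ℓ := ℓ) (by omega) hjl
    have h5 : ℓ - i - 1 = ℓ - (i + 1) := by omega
    have h6 : i + m + 1 - i = m + 1 := by omega
    rw [h5, h6] at hid
    have h7 : ((ℓ - i : ℕ) : ℝ) = (ℓ : ℝ) - i := by
      have hi : i ≤ ℓ := by omega
      push_cast [hi]; ring
    calc ((m : ℝ) + 1) * (Nat.choose (ℓ - i) (ℓ - (i + m + 1)))
        = (((m + 1) * Nat.choose (ℓ - i) (ℓ - (i + m + 1)) : ℕ) : ℝ) := by push_cast; ring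
      _ = (((ℓ - i) * Nat.choose (ℓ - (i+1)) (ℓ - (i + m + 1)) : ℕ) : ℝ) := by rw [hid]
      _ = ((ℓ : ℝ) - i) * (Nat.choose (ℓ - (i+1)) (ℓ - (i + m + 1))) := by
          push_cast; rw [h7]
  push_cast at hch hz hQ ⊢
  rw [mul_div_assoc', mul_div_assoc', div_eq_div_iff (mul_pos hz hQ).ne' hQ.ne']
  linear_combination (-(α + β + ((i:ℝ) + m + 1) + i + w - k + 1) * (-1:ℝ)^(i+(i+m+1))
    * (β - k + 1 + (i:ℝ)) * poch (β - k + 1 + (i:ℝ) + 1) m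
    * poch (α + β + ((i:ℝ) + m + 1) + i + w - k + 1 + 1) m) * hch

lemma xker_eq_xR (α β k : ℝ) (ℓ w : ℕ) (j : Fin (ℓ+1)) (i : Fin (ℓ+1))
    (h : (i : ℕ) ≤ (j : ℕ)) :
    xker α β k ℓ w j i = ((xR α β k ℓ w (i : ℕ) (j : ℕ) : ℝ) : ℂ) := by
  rcases lt_or_eq_of_le h with h | h
  · rw [xker, if_pos h, xR]
  · rw [xker, if_neg (by omega), if_pos h, xR, h]
    have : (j : ℕ) - (j : ℕ) = 0 := by omega
    rw [this]
    have hsign : (-1 : ℝ) ^ ((j : ℕ) + (j : ℕ)) = 1 := Even.neg_one_pow ⟨(j : ℕ), rfl⟩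
    simp [poch, Nat.choose_self, hsign]

lemma xker_eq_zero (α β k : ℝ) (ℓ w : ℕ) (j : Fin (ℓ+1)) (i : Fin (ℓ+1))
    (h : (j : ℕ) < (i : ℕ)) :
    xker α β k ℓ w j i = 0 := by
  rw [xker, if_neg (by omega), if_neg (by omega)]

lemma xker_self (α β k : ℝ) (ℓ w : ℕ) (j : Fin (ℓ+1)) :
    xker α β k ℓ w j j = 1 := by
  rw [xker, if_neg (by omega), if_pos rfl]

lemma mulVec_Mwj (α β k : ℝ) (ℓ w : ℕ) (j : Fin (ℓ+1)) (v : Fin (ℓ+1) → ℂ)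
    (i : Fin (ℓ+1)) :
    (Mwj α β k ℓ w j).mulVec v i
      = (((i : ℕ) : ℂ) - ((j : ℕ) : ℂ)) * ((α : ℂ) + β - k + 1 + (i : ℕ) + (j : ℕ) + w) * v i
        - (if h : (i : ℕ) < ℓ then
            ((ℓ : ℂ) - (i : ℕ)) * ((β : ℂ) - k + 1 + (i : ℕ))
              * v ⟨(i : ℕ) + 1, Nat.succ_lt_succ h⟩
          else 0) := by
  classical
  have h1 : ∑ i' : Fin (ℓ+1),
      (if (i : ℕ) = (i' : ℕ) then
          (((i : ℕ) : ℂ) - ((j : ℕ) : ℂ)) * ((α : ℂ) + β - k + 1 + (i : ℕ) + (j : ℕ) + w)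
        else 0) * v i'
      = (((i : ℕ) : ℂ) - ((j : ℕ) : ℂ)) * ((α : ℂ) + β - k + 1 + (i : ℕ) + (j : ℕ) + w) * v i := by
    rw [Finset.sum_eq_single i]
    · rw [if_pos rfl]
    · intro i' _ hne
      rw [if_neg (fun hc => hne (Fin.ext hc.symm)), zero_mul]
    · intro hmem; exact absurd (Finset.mem_univ i) hmem
  have h2 : ∑ i' : Fin (ℓ+1),
      (if (i' : ℕ) = (i : ℕ) + 1 then
          ((ℓ : ℂ) - (i : ℕ)) * ((β : ℂ) - k + 1 + (i : ℕ)) else 0) * v i'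
      = (if h : (i : ℕ) < ℓ then
          ((ℓ : ℂ) - (i : ℕ)) * ((β : ℂ) - k + 1 + (i : ℕ))
            * v ⟨(i : ℕ) + 1, Nat.succ_lt_succ h⟩
        else 0) := by
    by_cases h : (i : ℕ) < ℓ
    · rw [dif_pos h, Finset.sum_eq_single (⟨(i : ℕ) + 1, Nat.succ_lt_succ h⟩ : Fin (ℓ+1))]
      · rw [if_pos rfl]
      · intro i' _ hne
        rw [if_neg (fun hc => hne (Fin.ext hc)), zero_mul]
      · intro hmem; exact absurd (Finset.mem_univ _) hmem
    · rw [dif_neg h]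
      apply Finset.sum_eq_zero
      intro i' _
      have hi' := i'.2
      rw [if_neg (by omega), zero_mul]
  have h0 : (Mwj α β k ℓ w j).mulVec v i
      = ∑ i' : Fin (ℓ+1),
          ((if (i : ℕ) = (i' : ℕ) then
              (((i : ℕ) : ℂ) - ((j : ℕ) : ℂ)) * ((α : ℂ) + β - k + 1 + (i : ℕ) + (j : ℕ) + w)
            else 0) * v i'
          - (if (i' : ℕ) = (i : ℕ) + 1 then
              ((ℓ : ℂ) - (i : ℕ)) * ((β : ℂ) - k + 1 + (i : ℕ)) else 0) * v i') := by
    simp only [Matrix.mulVec, dotProduct, Mwj, Matrix.of_apply]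
    exact Finset.sum_congr rfl fun i' _ => sub_mul _ _ _
  rw [h0, Finset.sum_sub_distrib, h1, h2]

/-- The kernel of `M_{w,j}` is one-dimensional, spanned by the explicit vector `x`. -/
theorem ker_Mwj (α β k : ℝ) (ℓ : ℕ) (hα : -1 < α) (hβ : -1 < β)
    (hk0 : 0 < k) (hk1 : k < β + 1) (hℓ : 0 < ℓ) (w : ℕ) (j : Fin (ℓ+1)) :
    LinearMap.ker (Matrix.mulVecLin (Mwj α β k ℓ w j))
        = Submodule.span ℂ {xker α β k ℓ w j}
      ∧ xker α β k ℓ w j ≠ 0 := by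
  have hjl : (j : ℕ) ≤ ℓ := by omega
  set X := xker α β k ℓ w j with hXdef
  -- diagonal entries are nonzero off `j`
  have hD : ∀ i : Fin (ℓ+1), (i : ℕ) ≠ (j : ℕ) →
      (((i : ℕ) : ℂ) - ((j : ℕ) : ℂ)) * ((α : ℂ) + β - k + 1 + (i : ℕ) + (j : ℕ) + w) ≠ 0 := by
    intro i hne
    apply mul_ne_zero
    · rw [sub_ne_zero]
      exact fun h => hne (by exact_mod_cast h)
    · have hpos : (0:ℝ) < α + β - k + 1 + (i : ℕ) + (j : ℕ) + w := by
        have h1 : (1:ℝ) ≤ ((i : ℕ) : ℝ) + ((j : ℕ) : ℝ) := by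
          have : 1 ≤ (i : ℕ) + (j : ℕ) := by omega
          exact_mod_cast this
        nlinarith [Nat.cast_nonneg (α := ℝ) w]
      have he : (α : ℂ) + β - k + 1 + ((i : ℕ) : ℂ) + ((j : ℕ) : ℂ) + (w : ℂ)
          = ((α + β - k + 1 + (i : ℕ) + (j : ℕ) + w : ℝ) : ℂ) := by push_cast; ring
      rw [he]
      exact_mod_cast hpos.ne'
  -- complex recurrence for X
  have hrecC : ∀ (i : Fin (ℓ+1)) (hij : (i : ℕ) < (j : ℕ)),
      (((i : ℕ) : ℂ) - ((j : ℕ) : ℂ)) * ((α : ℂ) + β - k + 1 + (i : ℕ) + (j : ℕ) + w) * X i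
        = ((ℓ : ℂ) - (i : ℕ)) * ((β : ℂ) - k + 1 + (i : ℕ))
            * X ⟨(i : ℕ) + 1, Nat.succ_lt_succ (by omega)⟩ := by
    intro i hij
    rw [hXdef, xker_eq_xR α β k ℓ w j i (le_of_lt hij),
      xker_eq_xR α β k ℓ w j ⟨(i : ℕ) + 1, Nat.succ_lt_succ (by omega)⟩ (by simpa using hij)]
    have hr := recurR α β k hα hk1 ℓ w (i : ℕ) (j : ℕ) hij hjl
    have hrC := congrArg (fun r : ℝ => (r : ℂ)) hr
    push_cast at hrC ⊢
    linear_combination hrC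
  -- M X = 0
  have hMX : (Mwj α β k ℓ w j).mulVec X = 0 := by
    funext i
    rw [mulVec_Mwj]
    rcases lt_trichotomy ((i : ℕ)) ((j : ℕ)) with h | h | h
    · have hil : (i : ℕ) < ℓ := by omega
      rw [dif_pos hil, hrecC i h]
      simp
    · by_cases hil : (i : ℕ) < ℓ
      · rw [dif_pos hil, hXdef,
          xker_eq_zero α β k ℓ w j ⟨(i : ℕ) + 1, Nat.succ_lt_succ hil⟩ (by simp [← h])]
        have h0 : (((i : ℕ) : ℂ) - ((j : ℕ) : ℂ)) = 0 := by rw [h]; ring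
        simp [h0]
      · rw [dif_neg hil]
        have h0 : (((i : ℕ) : ℂ) - ((j : ℕ) : ℂ)) = 0 := by rw [h]; ring
        simp [h0]
    · have hXi : X i = 0 := xker_eq_zero α β k ℓ w j i h
      rw [hXi]
      by_cases hil : (i : ℕ) < ℓ
      · rw [dif_pos hil, hXdef,
          xker_eq_zero α β k ℓ w j ⟨(i : ℕ) + 1, Nat.succ_lt_succ hil⟩ (by simp; omega)]
        simp
      · rw [dif_neg hil]; simp
  constructor
  · apply le_antisymm
    · intro v hv
      rw [LinearMap.mem_ker, Matrix.mulVecLin_apply] at hv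
      have hrow : ∀ i : Fin (ℓ+1),
          (((i : ℕ) : ℂ) - ((j : ℕ) : ℂ)) * ((α : ℂ) + β - k + 1 + (i : ℕ) + (j : ℕ) + w) * v i
            - (if h : (i : ℕ) < ℓ then
                ((ℓ : ℂ) - (i : ℕ)) * ((β : ℂ) - k + 1 + (i : ℕ))
                  * v ⟨(i : ℕ) + 1, Nat.succ_lt_succ h⟩
              else 0) = 0 := by
        intro i
        have := congrFun hv i
        rwa [mulVec_Mwj] at this
      -- entries above j vanish
      have claim1 : ∀ n : ℕ, ∀ i : Fin (ℓ+1), ℓ - (i : ℕ) = n → (j : ℕ) < (i : ℕ) → v i = 0 := by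
        intro n
        induction n with
        | zero =>
          intro i hi hji
          have hil : ¬ (i : ℕ) < ℓ := by omega
          have h2 := hrow i
          rw [dif_neg hil, sub_zero] at h2
          exact (mul_eq_zero.mp h2).resolve_left (hD i (by omega))
        | succ n ih =>
          intro i hi hji
          have hil : (i : ℕ) < ℓ := by omega
          have h2 := hrow i
          rw [dif_pos hil] at h2
          have hnext : v ⟨(i : ℕ) + 1, Nat.succ_lt_succ hil⟩ = 0 :=
            ih ⟨(i : ℕ) + 1, Nat.succ_lt_succ hil⟩ (by simp; omega) (by simp; omega)
          rw [hnext, mul_zero, sub_zero] at h2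
          exact (mul_eq_zero.mp h2).resolve_left (hD i (by omega))
      -- entries at or below j are multiples
      have claim2 : ∀ n : ℕ, ∀ i : Fin (ℓ+1), (i : ℕ) + n = (j : ℕ) → v i = v j * X i := by
        intro n
        induction n with
        | zero =>
          intro i hi
          have : i = j := Fin.ext (by omega)
          subst this
          rw [hXdef, xker_self, mul_one]
        | succ n ih =>
          intro i hi
          have hij : (i : ℕ) < (j : ℕ) := by omega
          have hil : (i : ℕ) < ℓ := by omega
          have h2 := hrow i
          rw [dif_pos hil] at h2
          have hv1 : v ⟨(i : ℕ) + 1, Nat.succ_lt_succ hil⟩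
              = v j * X ⟨(i : ℕ) + 1, Nat.succ_lt_succ hil⟩ :=
            ih ⟨(i : ℕ) + 1, Nat.succ_lt_succ hil⟩ (by simp; omega)
          have hx := hrecC i hij
          have hD' := hD i (by omega)
          apply mul_left_cancel₀ hD'
          have hXeq : X ⟨(i : ℕ) + 1, Nat.succ_lt_succ (by omega : (i : ℕ) < ℓ)⟩
              = X ⟨(i : ℕ) + 1, Nat.succ_lt_succ hil⟩ := rfl
          calc (((i : ℕ) : ℂ) - ((j : ℕ) : ℂ)) * ((α : ℂ) + β - k + 1 + (i : ℕ) + (j : ℕ) + w)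
                * v i
              = ((ℓ : ℂ) - (i : ℕ)) * ((β : ℂ) - k + 1 + (i : ℕ))
                  * v ⟨(i : ℕ) + 1, Nat.succ_lt_succ hil⟩ := by linear_combination h2
            _ = v j * (((ℓ : ℂ) - (i : ℕ)) * ((β : ℂ) - k + 1 + (i : ℕ))
                  * X ⟨(i : ℕ) + 1, Nat.succ_lt_succ hil⟩) := by rw [hv1]; ring
            _ = (((i : ℕ) : ℂ) - ((j : ℕ) : ℂ)) * ((α : ℂ) + β - k + 1 + (i : ℕ) + (j : ℕ) + w)
                * (v j * X i) := by rw [← hXeq, ← hx]; ring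
      rw [Submodule.mem_span_singleton]
      refine ⟨v j, ?_⟩
      funext i
      rcases le_or_gt ((i : ℕ)) ((j : ℕ)) with h | h
      · have := claim2 ((j : ℕ) - (i : ℕ)) i (by omega)
        simpa [Pi.smul_apply, smul_eq_mul] using this.symm
      · have h1 : v i = 0 := claim1 (ℓ - (i : ℕ)) i rfl h
        have h2 : X i = 0 := xker_eq_zero α β k ℓ w j i h
        simp [Pi.smul_apply, smul_eq_mul, h1, h2]
    · rw [Submodule.span_le, Set.singleton_subset_iff]
      rw [SetLike.mem_coe, LinearMap.mem_ker, Matrix.mulVecLin_apply]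
      exact hMX
  · intro h0
    have hj1 := congrFun h0 j
    rw [hXdef, xker_self] at hj1
    simp at hj1
end
end

section
/- Assume that the numbers λ_j(w), for w ∈ ℕ₀ and 0 ≤ j ≤ ℓ, are pairwise distinct (i.e. λ_j(w) = λ_{j'}(w') implies (j,w) = (j',w')). Fix w ∈ ℕ₀, 0 ≤ j ≤ ℓ and put λ = λ_j(w). Then the complex vector space of ℂ^{ℓ+1}-valued polynomial functions F satisfying u(1−u)F''(u) + (C − uU)F'(u) − (V + λ)F(u) = 0 for all u is one-dimensional, and every nonzero element of this space is a polynomial of degree exactly w. -/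
/-!
Write a solution as `F = ∑ cₙ uⁿ` with `cₙ ∈ ℂ^{ℓ+1}`. Comparing coefficients of `uⁿ` turns the
equation into the recursion `(n+1)(n+C) c_{n+1} = Bₙ cₙ` with `Bₙ = (n(n-1)+λ) + nU + V`.
Each `Bₙ` is upper triangular with diagonal entries `λ - λᵢ(n)`, so by distinctness `Bₙ` is
invertible for `n ≠ w`, while `B_w` has a single vanishing diagonal entry and hence a
one-dimensional kernel. Descending from the degree, `cₙ = 0` for `n > w`; then `c_w ∈ ker B_w`
and the lower coefficients are determined by `c_w`. Conversely, running the recursion downwards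
from a kernel vector of `B_w` produces a solution.
-/

open Polynomial Matrix

noncomputable section

/-- Componentwise derivative of a vector of polynomials. -/
def vderiv (d : ℕ) : (Fin d → Polynomial ℂ) →ₗ[ℂ] (Fin d → Polynomial ℂ) :=
  LinearMap.pi fun i => (Polynomial.derivative (R := ℂ)).comp (LinearMap.proj i)

/-- The hypergeometric operator `D` acting on `ℂ^{ℓ+1}`-valued polynomials:
`(DF)(u) = u(1−u)F''(u) + (C−uU)F'(u) − V F(u)`. -/
def DlinV (α β k : ℝ) (ℓ : ℕ) :
    (Fin (ℓ+1) → Polynomial ℂ) →ₗ[ℂ] (Fin (ℓ+1) → Polynomial ℂ) :=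
  (((Matrix.scalar (Fin (ℓ+1)) (Polynomial.X * (1 - Polynomial.X))).mulVecLin).restrictScalars ℂ)
      ∘ₗ vderiv (ℓ+1) ∘ₗ vderiv (ℓ+1)
    + ((((Cmat β ℓ).map Polynomial.C
          - Matrix.scalar (Fin (ℓ+1)) Polynomial.X
              * (Umat α β ℓ).map Polynomial.C).mulVecLin).restrictScalars ℂ)
        ∘ₗ vderiv (ℓ+1)
    - (((Vmat α β k ℓ).map Polynomial.C).mulVecLin).restrictScalars ℂ

section Coefficients

variable {R : Type*} [CommRing R]

theorem Polynomial.coeff_X_mul_derivative (q : R[X]) (n : ℕ) :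
    (X * derivative q).coeff n = n * q.coeff n := by
  cases n with
  | zero => simp
  | succ n => rw [coeff_X_mul, coeff_derivative, mul_comm]; push_cast; ring

theorem Polynomial.coeff_X_mul_one_sub_X_mul_derivative_derivative (q : R[X]) (n : ℕ) :
    (X * (1 - X) * derivative (derivative q)).coeff n
      = (n + 1) * n * q.coeff (n + 1) - n * (n - 1) * q.coeff n := by
  have h : X * (1 - X) * derivative (derivative q)
      = X * derivative (derivative q) - (X * derivative (X * derivative q) - X * derivative q) := by
    simp only [derivative_mul, derivative_X, one_mul]
    ring
  rw [h, coeff_sub, coeff_sub, coeff_X_mul_derivative, coeff_X_mul_derivative,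
    coeff_X_mul_derivative, coeff_derivative]
  ring

end Coefficients

section CoeffVec

variable {R : Type*} [CommSemiring R] {ι : Type*}

def coeffVec (n : ℕ) : (ι → R[X]) →ₗ[R] (ι → R) :=
  LinearMap.pi fun i => (lcoeff R n).comp (LinearMap.proj i)

theorem coeffVec_apply (n : ℕ) (P : ι → R[X]) (i : ι) : coeffVec n P i = (P i).coeff n := rfl

theorem coeffVec_injective {P Q : ι → R[X]} (h : ∀ n, coeffVec n P = coeffVec n Q) : P = Q :=
  funext fun i => Polynomial.ext fun n => congrFun (h n) i

theorem exists_forall_coeffVec_eq_zero [Fintype ι] (P : ι → R[X]) :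
    ∃ N, ∀ n ≥ N, coeffVec n P = 0 := by
  refine ⟨Finset.univ.sup (fun i => (P i).natDegree) + 1, fun n hn => funext fun i => ?_⟩
  exact coeff_eq_zero_of_natDegree_lt
    ((Finset.le_sup (f := fun i => (P i).natDegree) (Finset.mem_univ i)).trans_lt hn)

theorem coeffVec_map_C_mulVec [Fintype ι] (M : Matrix ι ι R) (P : ι → R[X]) (n : ℕ) :
    coeffVec n (M.map C *ᵥ P) = M *ᵥ coeffVec n P := by
  ext i
  simp [coeffVec_apply, mulVec, dotProduct, finsetSum_coeff]

def polyVecOfCoeffs (w : ℕ) (c : ℕ → ι → R) : ι → R[X] :=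
  fun i => ∑ n ∈ Finset.range (w + 1), monomial n (c n i)

theorem coeffVec_polyVecOfCoeffs {w : ℕ} {c : ℕ → ι → R} (hc : ∀ n, w < n → c n = 0) (n : ℕ) :
    coeffVec n (polyVecOfCoeffs w c) = c n := by
  ext i
  simp only [coeffVec_apply, polyVecOfCoeffs, finsetSum_coeff, coeff_monomial,
    Finset.sum_ite_eq', Finset.mem_range]
  split_ifs with h
  · rfl
  · rw [hc n (by omega), Pi.zero_apply]

theorem degree_le_and_exists_degree_eq {w : ℕ} {P : ι → R[X]}
    (hP : ∀ n, w < n → coeffVec n P = 0) (hw : coeffVec w P ≠ 0) :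
    (∀ i, (P i).degree ≤ w) ∧ ∃ i, (P i).degree = w := by
  have hle : ∀ i, (P i).degree ≤ w := fun i =>
    degree_le_iff_coeff_zero _ _ |>.mpr fun n hn => congrFun (hP n (by exact_mod_cast hn)) i
  obtain ⟨i, hi⟩ := Function.ne_iff.mp hw
  exact ⟨hle, i, le_antisymm (hle i) (le_degree_of_ne_zero hi)⟩

end CoeffVec

section Triangular

variable {K : Type*} [Field K] {ι : Type*} [Fintype ι]

theorem Matrix.mulVec_eq_iff_eq_nonsing_inv_mulVec [DecidableEq ι] {B : Matrix ι ι K}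
    (hB : IsUnit B) {x y : ι → K} : B *ᵥ x = y ↔ x = B⁻¹ *ᵥ y := by
  rw [isUnit_iff_isUnit_det] at hB
  constructor
  · rintro rfl
    rw [mulVec_mulVec, nonsing_inv_mul _ hB, one_mulVec]
  · rintro rfl
    rw [mulVec_mulVec, mul_nonsing_inv _ hB, one_mulVec]

variable [LinearOrder ι] {A : Matrix ι ι K}

theorem Matrix.IsUpperTriangular.isUnit (hA : A.IsUpperTriangular) (hdiag : ∀ i, A i i ≠ 0) :
    IsUnit A := by
  rw [isUnit_iff_isUnit_det, det_of_isUpperTriangular hA, isUnit_iff_ne_zero]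
  exact Finset.prod_ne_zero_iff.mpr fun i _ => hdiag i

theorem Matrix.IsUpperTriangular.eq_zero_of_mulVec_eq_zero (hA : A.IsUpperTriangular) {j : ι}
    (hdiag : ∀ i ≠ j, A i i ≠ 0) {x : ι → K} (hx : A *ᵥ x = 0) (hxj : x j = 0) : x = 0 := by
  funext i
  induction i using WellFoundedGT.induction with
  | _ i ih =>
    by_cases hij : i = j
    · rw [hij, hxj, Pi.zero_apply]
    have hrow : (A *ᵥ x) i = A i i * x i := by
      refine Finset.sum_eq_single i (fun i' _ hi' => ?_) (by simp)
      rcases lt_or_gt_of_ne hi' with h | h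
      · simp [hA h]
      · simp [ih i' h]
    rw [hx, Pi.zero_apply, eq_comm, mul_eq_zero] at hrow
    exact hrow.resolve_left (hdiag i hij)

theorem Matrix.IsUpperTriangular.exists_ker_eq_span (hA : A.IsUpperTriangular) {j : ι}
    (hj : A j j = 0) (hdiag : ∀ i ≠ j, A i i ≠ 0) :
    ∃ v, v ≠ 0 ∧ A *ᵥ v = 0 ∧ ∀ x, A *ᵥ x = 0 → ∃ t : K, x = t • v := by
  have hdet : A.det = 0 := by
    rw [det_of_isUpperTriangular hA]
    exact Finset.prod_eq_zero (Finset.mem_univ j) hj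
  obtain ⟨v, hv0, hv⟩ := exists_mulVec_eq_zero_iff.mpr hdet
  have hvj : v j ≠ 0 := fun h => hv0 (hA.eq_zero_of_mulVec_eq_zero hdiag hv h)
  refine ⟨v, hv0, hv, fun x hx => ⟨x j / v j, ?_⟩⟩
  rw [← sub_eq_zero]
  refine hA.eq_zero_of_mulVec_eq_zero hdiag ?_ ?_
  · rw [mulVec_sub, mulVec_smul, hx, hv, smul_zero, sub_zero]
  · simp [hvj]

end Triangular

section Recursion

variable {K : Type*} [Field K] {ι : Type*} [Fintype ι] [DecidableEq ι]
  (M B : ℕ → Matrix ι ι K) (w : ℕ)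

def SolvesCoeffRecursion (P : ι → K[X]) : Prop :=
  ∀ n, M n *ᵥ coeffVec (n + 1) P = B n *ᵥ coeffVec n P

def descendingSolution (v : ι → K) (n : ℕ) : ι → K :=
  if w < n then 0
  else if n = w then v
  else (B n)⁻¹ *ᵥ (M n *ᵥ descendingSolution v (n + 1))
termination_by w - n

variable {M B w}

theorem descendingSolution_eq_zero {v : ι → K} {n : ℕ} (h : w < n) :
    descendingSolution M B w v n = 0 := by
  rw [descendingSolution, if_pos h]

theorem descendingSolution_self (v : ι → K) : descendingSolution M B w v w = v := by
  rw [descendingSolution, if_neg (lt_irrefl w), if_pos rfl]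

theorem descendingSolution_of_lt {v : ι → K} {n : ℕ} (h : n < w) :
    descendingSolution M B w v n = (B n)⁻¹ *ᵥ (M n *ᵥ descendingSolution M B w v (n + 1)) := by
  rw [descendingSolution, if_neg (by omega), if_neg h.ne]

theorem mulVec_descendingSolution_succ (hB : ∀ n ≠ w, IsUnit (B n)) {v : ι → K}
    (hv : B w *ᵥ v = 0) (n : ℕ) :
    M n *ᵥ descendingSolution M B w v (n + 1) = B n *ᵥ descendingSolution M B w v n := by
  rcases lt_trichotomy n w with h | rfl | h
  · rw [eq_comm, mulVec_eq_iff_eq_nonsing_inv_mulVec (hB n h.ne), descendingSolution_of_lt h]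
  · rw [descendingSolution_eq_zero n.lt_succ_self, descendingSolution_self, hv, mulVec_zero]
  · rw [descendingSolution_eq_zero h, descendingSolution_eq_zero (h.trans n.lt_succ_self),
      mulVec_zero, mulVec_zero]

theorem eq_descendingSolution (hB : ∀ n ≠ w, IsUnit (B n)) {c : ℕ → ι → K}
    (hc : ∀ n, M n *ᵥ c (n + 1) = B n *ᵥ c n) {N : ℕ} (hN : ∀ n ≥ N, c n = 0) :
    c = descendingSolution M B w (c w) := by
  have hvanish : ∀ n, w < n → c n = 0 := by
    intro n hn
    refine Nat.decreasingInduction' (P := fun m => c m = 0) (fun m _ hm hsucc => ?_)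
      (le_max_right N n) (hN _ (le_max_left N n))
    rw [← (mulVec_injective_iff_isUnit.mpr (hB m (by omega))).eq_iff, ← hc, hsucc, mulVec_zero,
      mulVec_zero]
  funext n
  rcases lt_or_ge w n with h | h
  · rw [hvanish n h, descendingSolution_eq_zero h]
  refine Nat.decreasingInduction' (P := fun m => c m = descendingSolution M B w (c w) m)
    (fun m hm _ hsucc => ?_) h (descendingSolution_self _).symm
  rw [descendingSolution_of_lt hm, ← hsucc, ← mulVec_eq_iff_eq_nonsing_inv_mulVec (hB m hm.ne), hc]

theorem descendingSolution_smul (hB : ∀ n ≠ w, IsUnit (B n)) {v : ι → K} (hv : B w *ᵥ v = 0)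
    (t : K) :
    descendingSolution M B w (t • v) = t • descendingSolution M B w v := by
  have h := eq_descendingSolution (M := M) hB (c := t • descendingSolution M B w v)
    (fun n => by simp only [Pi.smul_apply, mulVec_smul, mulVec_descendingSolution_succ hB hv])
    (N := w + 1) (fun n hn => by rw [Pi.smul_apply, descendingSolution_eq_zero hn, smul_zero])
  rw [h, Pi.smul_apply, descendingSolution_self]

theorem solvesCoeffRecursion_iff_eq_smul (hB : ∀ n ≠ w, IsUnit (B n)) {v : ι → K}
    (hv : B w *ᵥ v = 0) (hker : ∀ x, B w *ᵥ x = 0 → ∃ t : K, x = t • v) (P : ι → K[X]) :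
    SolvesCoeffRecursion M B P ↔
      ∃ t : K, P = t • polyVecOfCoeffs w (descendingSolution M B w v) := by
  have hcoeff := coeffVec_polyVecOfCoeffs (w := w) (c := descendingSolution M B w v)
    fun _ => descendingSolution_eq_zero
  constructor
  · intro hP
    obtain ⟨N, hN⟩ := exists_forall_coeffVec_eq_zero P
    have hdesc := eq_descendingSolution (M := M) hB (c := fun n => coeffVec n P) hP hN
    have hPw : B w *ᵥ coeffVec w P = 0 := by
      rw [← hP, congrFun hdesc (w + 1), descendingSolution_eq_zero w.lt_succ_self, mulVec_zero]
    obtain ⟨t, ht⟩ := hker _ hPw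
    refine ⟨t, coeffVec_injective fun n => ?_⟩
    rw [map_smul, hcoeff, congrFun hdesc n, ht, descendingSolution_smul hB hv, Pi.smul_apply]
  · rintro ⟨t, rfl⟩ n
    rw [map_smul, map_smul, hcoeff, hcoeff, mulVec_smul, mulVec_smul,
      mulVec_descendingSolution_succ hB hv]

theorem exists_solvesCoeffRecursion_line (hB : ∀ n ≠ w, IsUnit (B n)) {v : ι → K}
    (hv : B w *ᵥ v = 0) (hker : ∀ x, B w *ᵥ x = 0 → ∃ t : K, x = t • v) (hv0 : v ≠ 0) :
    ∃ P₀ : ι → K[X], P₀ ≠ 0 ∧ SolvesCoeffRecursion M B P₀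
      ∧ (∀ P, SolvesCoeffRecursion M B P → ∃ c : K, P = c • P₀)
      ∧ (∀ P, SolvesCoeffRecursion M B P → P ≠ 0 →
          (∀ i, (P i).degree ≤ (w : WithBot ℕ)) ∧ ∃ i, (P i).degree = (w : WithBot ℕ)) := by
  set c₀ := descendingSolution M B w v
  have hc₀_lt : ∀ n, w < n → c₀ n = 0 := fun _ => descendingSolution_eq_zero
  have hc₀_w : c₀ w = v := descendingSolution_self v
  have hsol := solvesCoeffRecursion_iff_eq_smul (M := M) hB hv hker
  have hcoeff : ∀ t n, coeffVec n (t • polyVecOfCoeffs w c₀) = t • c₀ n := fun t n => by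
    rw [map_smul, coeffVec_polyVecOfCoeffs hc₀_lt]
  refine ⟨polyVecOfCoeffs w c₀, fun h0 => hv0 ?_, (hsol _).2 ⟨1, (one_smul _ _).symm⟩,
    fun P hP => (hsol P).1 hP, fun P hP hP0 => ?_⟩
  · rw [← hc₀_w, ← coeffVec_polyVecOfCoeffs hc₀_lt, h0, map_zero]
  obtain ⟨t, rfl⟩ := (hsol P).1 hP
  refine degree_le_and_exists_degree_eq (fun n hn => ?_) ?_
  · rw [hcoeff, hc₀_lt n hn, smul_zero]
  · rw [hcoeff, hc₀_w]
    exact smul_ne_zero (by rintro rfl; simp at hP0) hv0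

end Recursion

section Hypergeometric

def succCoeffMat {ι K : Type*} [Fintype ι] [DecidableEq ι] [CommRing K] (C : Matrix ι ι K)
    (n : ℕ) : Matrix ι ι K :=
  ((n : K) + 1) • ((n : K) • 1 + C)

def coeffMat {ι K : Type*} [Fintype ι] [DecidableEq ι] [CommRing K] (U V : Matrix ι ι K)
    (lam : K) (n : ℕ) : Matrix ι ι K :=
  ((n : K) * ((n : K) - 1) + lam) • 1 + (n : K) • U + V

variable {α β k : ℝ} {ℓ : ℕ}

theorem DlinV_apply (P : Fin (ℓ + 1) → ℂ[X]) :
    DlinV α β k ℓ P = (fun i => X * (1 - X) * derivative (derivative (P i)))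
      + (Cmat β ℓ).map C *ᵥ (fun i => derivative (P i))
      - (Umat α β ℓ).map C *ᵥ (fun i => X * derivative (P i))
      - (Vmat α β k ℓ).map C *ᵥ P := by
  ext1 i
  simp only [DlinV, vderiv, LinearMap.sub_apply, LinearMap.add_apply, LinearMap.comp_apply,
    LinearMap.restrictScalars_apply, Matrix.mulVecLin_apply, Pi.sub_apply, Pi.add_apply,
    Matrix.sub_mulVec, ← Matrix.mulVec_mulVec, scalar_apply, mulVec_diagonal, LinearMap.pi_apply,
    LinearMap.proj_apply]
  simp only [mulVec, dotProduct, map_apply, Finset.mul_sum, LinearMap.pi_apply,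
    LinearMap.comp_apply, LinearMap.proj_apply, mul_left_comm X]
  ring

theorem coeffVec_DlinV_sub_smul (lam : ℂ) (P : Fin (ℓ + 1) → ℂ[X]) (n : ℕ) :
    coeffVec n (DlinV α β k ℓ P - lam • P)
      = succCoeffMat (Cmat β ℓ) n *ᵥ coeffVec (n + 1) P
        - coeffMat (Umat α β ℓ) (Vmat α β k ℓ) lam n *ᵥ coeffVec n P := by
  have h₂ : coeffVec n (fun i => X * (1 - X) * derivative (derivative (P i)))
      = ((n + 1) * n : ℂ) • coeffVec (n + 1) P - (n * (n - 1) : ℂ) • coeffVec n P := by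
    ext i
    simp [coeffVec_apply, coeff_X_mul_one_sub_X_mul_derivative_derivative]
  have h₁ : coeffVec n (fun i => derivative (P i)) = ((n : ℂ) + 1) • coeffVec (n + 1) P := by
    ext i
    simp [coeffVec_apply, coeff_derivative, mul_comm]
  have hX : coeffVec n (fun i => X * derivative (P i)) = (n : ℂ) • coeffVec n P := by
    ext i
    simp [coeffVec_apply, coeff_X_mul_derivative]
  rw [DlinV_apply, map_sub, map_sub, map_sub, map_add, map_smul, h₂, coeffVec_map_C_mulVec,
    coeffVec_map_C_mulVec, coeffVec_map_C_mulVec, h₁, hX]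
  simp only [succCoeffMat, coeffMat, add_mulVec, smul_mulVec, one_mulVec, mulVec_smul]
  module

theorem DlinV_eq_smul_iff (lam : ℂ) (P : Fin (ℓ + 1) → ℂ[X]) :
    DlinV α β k ℓ P = lam • P ↔
      SolvesCoeffRecursion (succCoeffMat (Cmat β ℓ))
        (coeffMat (Umat α β ℓ) (Vmat α β k ℓ) lam) P := by
  rw [← sub_eq_zero]
  constructor
  · intro h n
    rw [← sub_eq_zero, ← coeffVec_DlinV_sub_smul, h, map_zero]
  · intro h
    refine coeffVec_injective fun n => ?_
    rw [coeffVec_DlinV_sub_smul, h, sub_self, map_zero]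

theorem coeffMat_isUpperTriangular (lam : ℂ) (n : ℕ) :
    (coeffMat (Umat α β ℓ) (Vmat α β k ℓ) lam n).IsUpperTriangular := by
  intro i i' (h : i' < i)
  have h₁ : (i : ℕ) ≠ i' := by omega
  have h₂ : (i' : ℕ) ≠ i + 1 := by omega
  simp [coeffMat, Umat, Vmat, one_apply, h.ne', h₁, h₂]

theorem coeffMat_apply_self (lam : ℂ) (n : ℕ) (i : Fin (ℓ + 1)) :
    coeffMat (Umat α β ℓ) (Vmat α β k ℓ) lam n i i = lam - lamEig α β k ℓ n i := by
  simp [coeffMat, Umat, Vmat, lamEig]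
  ring

end Hypergeometric

theorem unique_polynomial_solution_general (α β k : ℝ) (ℓ : ℕ)
    (hdistinct : ∀ (w w' : ℕ) (j j' : Fin (ℓ+1)),
      lamEig α β k ℓ w j = lamEig α β k ℓ w' j' → w = w' ∧ j = j')
    (w : ℕ) (j : Fin (ℓ+1)) :
    ∃ P₀ : Fin (ℓ+1) → Polynomial ℂ, P₀ ≠ 0
      ∧ DlinV α β k ℓ P₀ = ((lamEig α β k ℓ w j : ℝ) : ℂ) • P₀
      ∧ (∀ P : Fin (ℓ+1) → Polynomial ℂ,
          DlinV α β k ℓ P = ((lamEig α β k ℓ w j : ℝ) : ℂ) • P → ∃ c : ℂ, P = c • P₀)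
      ∧ (∀ P : Fin (ℓ+1) → Polynomial ℂ,
          DlinV α β k ℓ P = ((lamEig α β k ℓ w j : ℝ) : ℂ) • P → P ≠ 0 →
            (∀ i, (P i).degree ≤ (w : WithBot ℕ)) ∧ ∃ i, (P i).degree = (w : WithBot ℕ)) := by
  set lam : ℂ := ((lamEig α β k ℓ w j : ℝ) : ℂ)
  have hdiag : ∀ n i, (n ≠ w ∨ i ≠ j) → coeffMat (Umat α β ℓ) (Vmat α β k ℓ) lam n i i ≠ 0 := by
    intro n i hni h
    rw [coeffMat_apply_self, sub_eq_zero, Complex.ofReal_inj] at h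
    obtain ⟨rfl, rfl⟩ := hdistinct w n j i h
    simp at hni
  obtain ⟨v, hv0, hv, hker⟩ := (coeffMat_isUpperTriangular lam w).exists_ker_eq_span
    (by rw [coeffMat_apply_self, sub_self]) fun i hi => hdiag w i (.inr hi)
  simp_rw [DlinV_eq_smul_iff]
  exact exists_solvesCoeffRecursion_line
    (fun n hn => (coeffMat_isUpperTriangular lam n).isUnit fun i => hdiag n i (.inl hn)) hv hker hv0

/-- If all the eigenvalues `λ_j(w)` are distinct, then for `λ = λ_j(w)` the space of
`ℂ^{ℓ+1}`-valued polynomial solutions of the hypergeometric equation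
`u(1−u)F'' + (C−uU)F' − (V+λ)F = 0` is one-dimensional, and every nonzero solution has
degree exactly `w`. -/
theorem unique_polynomial_solution (α β k : ℝ) (ℓ : ℕ) (hα : -1 < α) (hβ : -1 < β)
    (hk0 : 0 < k) (hk1 : k < β + 1) (hℓ : 0 < ℓ)
    (hdistinct : ∀ (w w' : ℕ) (j j' : Fin (ℓ+1)),
      lamEig α β k ℓ w j = lamEig α β k ℓ w' j' → w = w' ∧ j = j')
    (w : ℕ) (j : Fin (ℓ+1)) :
    ∃ P₀ : Fin (ℓ+1) → Polynomial ℂ, P₀ ≠ 0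
      ∧ DlinV α β k ℓ P₀ = ((lamEig α β k ℓ w j : ℝ) : ℂ) • P₀
      ∧ (∀ P : Fin (ℓ+1) → Polynomial ℂ,
          DlinV α β k ℓ P = ((lamEig α β k ℓ w j : ℝ) : ℂ) • P → ∃ c : ℂ, P = c • P₀)
      ∧ (∀ P : Fin (ℓ+1) → Polynomial ℂ,
          DlinV α β k ℓ P = ((lamEig α β k ℓ w j : ℝ) : ℂ) • P → P ≠ 0 →
            (∀ i, (P i).degree ≤ (w : WithBot ℕ)) ∧ ∃ i, (P i).degree = (w : WithBot ℕ)) :=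
  unique_polynomial_solution_general α β k ℓ hdistinct w j
end
end

section
/- Let {P_n}_{n≥0} be a sequence of matrix orthogonal polynomials with respect to W, and let D ∈ 𝒟 be symmetric with respect to W, i.e. ∫ₐᵇ (DQ)(t)* W(t) P(t) dt = ∫ₐᵇ Q(t)* W(t) (DP)(t) dt for all matrix polynomials P, Q. Then for every n ≥ 0 there exists a matrix Λ_n ∈ M_{L×L}(ℂ) with D(P_n*) = P_n*·Λ_n, where P_n* denotes the polynomial whose value at t is the conjugate transpose of P_n(t). -/
open Polynomial Matrix MeasureTheory
open scoped ComplexOrder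

noncomputable section

/-- `L×L` matrix-valued polynomials. -/
abbrev MP (L : ℕ) := Matrix (Fin L) (Fin L) (Polynomial ℂ)

/-- Entrywise derivative of a matrix polynomial. -/
def pder {L : ℕ} (P : MP L) : MP L := Matrix.of fun i j => Polynomial.derivative (P i j)

/-- Evaluation of a matrix polynomial at a real point. -/
def evalM {L : ℕ} (P : MP L) (t : ℝ) : Matrix (Fin L) (Fin L) ℂ :=
  Matrix.of fun i j => (P i j).eval (t : ℂ)

/-- `P*`: the matrix polynomial whose value at a real `t` is the conjugate transpose of
`P(t)`. -/
def starMP {L : ℕ} (P : MP L) : MP L :=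
  Matrix.of fun i j => (P j i).map (starRingEnd ℂ)

/-- An `L×L` matrix weight on the interval `(a,b)`: smooth, with positive definite
(Hermitian) values and finite moments. -/
structure MatrixWeight (L : ℕ) (a b : ℝ) where
  W : ℝ → Matrix (Fin L) (Fin L) ℂ
  smooth : ∀ i j, ContDiffOn ℝ (⊤ : ℕ∞) (fun t => W t i j) (Set.Ioo a b)
  posdef : ∀ t ∈ Set.Ioo a b, (W t).PosDef
  moments : ∀ (n : ℕ) (i j : Fin L),
    IntervalIntegrable (fun t => |t| ^ n * ‖W t i j‖) MeasureTheory.volume a b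

/-- The matrix-valued pairing `(P,Q) = ∫ₐᵇ P(t) W(t) Q(t)* dt`. -/
def mop {L : ℕ} {a b : ℝ} (Wt : MatrixWeight L a b) (P Q : MP L) :
    Matrix (Fin L) (Fin L) ℂ :=
  Matrix.of fun i j => ∫ t in a..b, (evalM P t * Wt.W t * (evalM Q t)ᴴ) i j

/-- A sequence of matrix orthogonal polynomials with respect to the weight `W`:
`deg Pₙ = n`, nonsingular leading coefficient, and `(Pₙ,Pₘ) = 0` for `n ≠ m`. -/
def IsMOPS {L : ℕ} {a b : ℝ} (Wt : MatrixWeight L a b) (P : ℕ → MP L) : Prop :=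
  (∀ (n : ℕ) (i j : Fin L), ((P n) i j).degree ≤ (n : WithBot ℕ))
    ∧ (∀ n : ℕ, ((P n).map fun q => q.coeff n).det ≠ 0)
    ∧ (∀ n m : ℕ, n ≠ m → mop Wt (P n) (P m) = 0)

/-- Membership in the class `𝒟` of differential operators `D = Σ_{i=0}^s F_i(t) dⁱ/dtⁱ`
with matrix polynomial coefficients `F_i` of degree at most `i`. -/
def InD {L : ℕ} (D : MP L → MP L) : Prop :=
  ∃ (s : ℕ) (F : ℕ → MP L),
    (∀ i : ℕ, i ≤ s → ∀ r c : Fin L, ((F i) r c).degree ≤ (i : WithBot ℕ))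
      ∧ ∀ P : MP L, D P = ∑ i ∈ Finset.range (s+1), F i * pder^[i] P

/-- Membership in the algebra `𝒟(W)`: operators in `𝒟` having all the `Pₙ*` as
eigenfunctions, `D(Pₙ*) = Pₙ*·Λₙ(D)`. -/
def DWmem {L : ℕ} {a b : ℝ} (Wt : MatrixWeight L a b) (P : ℕ → MP L)
    (D : MP L → MP L) : Prop :=
  InD D ∧ ∀ n : ℕ, ∃ Λ : Matrix (Fin L) (Fin L) ℂ,
    D (starMP (P n)) = starMP (P n) * Λ.map Polynomial.C


namespace Aux

variable {L : ℕ} {a b : ℝ}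

lemma evalM_mul (A B : MP L) (t : ℝ) : evalM (A * B) t = evalM A t * evalM B t := by
  ext i j
  simp [evalM, Matrix.mul_apply, Polynomial.eval_finset_sum]

lemma evalM_map_const (M : Matrix (Fin L) (Fin L) ℂ) (t : ℝ) :
    evalM (M.map Polynomial.C) t = M := by
  ext i j; simp [evalM, Matrix.map_apply]

lemma evalM_sum {ι : Type*} (s : Finset ι) (f : ι → MP L) (t : ℝ) :
    evalM (∑ k ∈ s, f k) t = ∑ k ∈ s, evalM (f k) t := by
  ext i j
  simp [evalM, Matrix.sum_apply, Polynomial.eval_finset_sum]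

lemma evalM_starMP (Q : MP L) (t : ℝ) : evalM (starMP Q) t = (evalM Q t)ᴴ := by
  ext i j
  simp only [evalM, starMP, Matrix.conjTranspose_apply, Matrix.of_apply]
  rw [Polynomial.eval_map,
    show ((t : ℂ)) = (starRingEnd ℂ) (t : ℂ) from (Complex.conj_ofReal t).symm,
    Polynomial.eval₂_at_apply]
  simp [Complex.conj_ofReal]

lemma starMP_degree (Q : MP L) (i j : Fin L) :
    ((starMP Q) i j).degree = (Q j i).degree :=
  Polynomial.degree_map_eq_of_injective (starRingEnd ℂ).injective _

lemma pder_iter (m : ℕ) (Q : MP L) (i j : Fin L) :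
    (pder^[m] Q) i j = (⇑Polynomial.derivative)^[m] (Q i j) := by
  induction m generalizing Q with
  | zero => rfl
  | succ m IH =>
    rw [Function.iterate_succ_apply, IH (pder Q)]
    show (⇑Polynomial.derivative)^[m] (Polynomial.derivative (Q i j)) = _
    rw [← Function.iterate_succ_apply]

lemma deg_term (fp q : Polynomial ℂ) (i n : ℕ) (hf : fp.degree ≤ (i : WithBot ℕ))
    (hq : q.degree ≤ (n : WithBot ℕ)) :
    (fp * (⇑Polynomial.derivative)^[i] q).degree ≤ (n : WithBot ℕ) := by
  by_cases h : n < i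
  · have hz : (⇑Polynomial.derivative)^[i] q = 0 :=
      Polynomial.iterate_derivative_eq_zero
        (lt_of_le_of_lt (Polynomial.natDegree_le_iff_degree_le.2 hq) h)
    rw [hz, mul_zero, Polynomial.degree_zero]
    exact bot_le
  · push_neg at h
    have h1 : ((⇑Polynomial.derivative)^[i] q).degree ≤ ((n - i : ℕ) : WithBot ℕ) := by
      refine le_trans (Polynomial.degree_le_natDegree) ?_
      have : ((⇑Polynomial.derivative)^[i] q).natDegree ≤ n - i :=
        le_trans (Polynomial.natDegree_iterate_derivative _ _)
          (Nat.sub_le_sub_right (Polynomial.natDegree_le_iff_degree_le.2 hq) i)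
      exact_mod_cast Nat.cast_le.2 this
    calc (fp * (⇑Polynomial.derivative)^[i] q).degree
        ≤ fp.degree + ((⇑Polynomial.derivative)^[i] q).degree := Polynomial.degree_mul_le _ _
      _ ≤ (i : WithBot ℕ) + ((n - i : ℕ) : WithBot ℕ) := add_le_add hf h1
      _ = ((i + (n - i) : ℕ) : WithBot ℕ) := by push_cast; ring
      _ = (n : WithBot ℕ) := by rw [Nat.add_sub_cancel' h]

lemma degree_D (D : MP L → MP L) (hD : InD D) (Q : MP L) (n : ℕ)
    (hQ : ∀ i j, (Q i j).degree ≤ (n : WithBot ℕ)) :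
    ∀ i j, ((D Q) i j).degree ≤ (n : WithBot ℕ) := by
  obtain ⟨s, F, hF, hDF⟩ := hD
  intro r c
  rw [hDF]
  rw [Matrix.sum_apply]
  refine le_trans (Polynomial.degree_sum_le _ _) ?_
  refine Finset.sup_le fun i hi => ?_
  rw [Matrix.mul_apply]
  refine le_trans (Polynomial.degree_sum_le _ _) ?_
  refine Finset.sup_le fun k _ => ?_
  rw [pder_iter]
  exact deg_term _ _ _ _ (hF i (Nat.lt_succ_iff.1 (Finset.mem_range.1 hi)) r k) (hQ k c)

lemma span_lemma (P : ℕ → MP L)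
    (hdeg : ∀ (n : ℕ) (i j : Fin L), ((P n) i j).degree ≤ (n : WithBot ℕ))
    (hlead : ∀ n : ℕ, ((P n).map fun q => q.coeff n).det ≠ 0) :
    ∀ (n : ℕ) (Q : MP L), (∀ i j, (Q i j).degree < (n : ℕ)) →
      ∃ C : ℕ → Matrix (Fin L) (Fin L) ℂ,
        Q = ∑ k ∈ Finset.range n, starMP (P k) * (C k).map Polynomial.C := by
  intro n
  induction n with
  | zero =>
    intro Q hQ
    refine ⟨0, ?_⟩
    rw [Finset.range_zero, Finset.sum_empty]
    ext i j
    have hz : Q i j = 0 := Polynomial.degree_eq_bot.1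
      (Nat.WithBot.lt_zero_iff.1 (by exact_mod_cast hQ i j))
    simp [hz]
  | succ m IH =>
    intro Q hQ
    set S : Matrix (Fin L) (Fin L) ℂ := (P m).map fun q => q.coeff m with hSdef
    have hSu : IsUnit (Sᴴ).det := by
      rw [Matrix.det_conjTranspose]
      exact (isUnit_iff_ne_zero).2 (star_ne_zero.2 (hlead m))
    set M : Matrix (Fin L) (Fin L) ℂ := Q.map fun q => q.coeff m with hMdef
    set Cm : Matrix (Fin L) (Fin L) ℂ := (Sᴴ)⁻¹ * M with hCm
    set R : MP L := Q - starMP (P m) * Cm.map Polynomial.C with hR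
    have hQdeg : ∀ i j, (Q i j).degree ≤ (m : WithBot ℕ) := by
      intro i j
      rw [Polynomial.degree_le_iff_coeff_zero]
      intro k hk
      refine Polynomial.coeff_eq_zero_of_degree_lt (lt_of_lt_of_le (hQ i j) ?_)
      exact_mod_cast Nat.succ_le_of_lt (by exact_mod_cast hk)
    have hproddeg : ∀ i j, ((starMP (P m) * Cm.map Polynomial.C) i j).degree ≤ (m : WithBot ℕ) := by
      intro i j
      rw [Matrix.mul_apply]
      refine le_trans (Polynomial.degree_sum_le _ _) (Finset.sup_le fun k _ => ?_)
      refine le_trans (Polynomial.degree_mul_le _ _) ?_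
      have h1 : ((starMP (P m)) i k).degree ≤ (m : WithBot ℕ) := by
        rw [starMP_degree]; exact hdeg m k i
      have h2 : ((Cm.map Polynomial.C) k j).degree ≤ 0 := by
        simp [Matrix.map_apply, Polynomial.degree_C_le]
      calc ((starMP (P m)) i k).degree + ((Cm.map Polynomial.C) k j).degree
          ≤ (m : WithBot ℕ) + 0 := add_le_add h1 h2
        _ = (m : WithBot ℕ) := add_zero _
    have hcoeffprod : ∀ i j, ((starMP (P m) * Cm.map Polynomial.C) i j).coeff m = M i j := by
      intro i j
      rw [Matrix.mul_apply, Polynomial.finset_sum_coeff]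
      have hterm : ∀ k, ((starMP (P m)) i k * (Cm.map Polynomial.C) k j).coeff m
          = Sᴴ i k * Cm k j := by
        intro k
        rw [Matrix.map_apply, Polynomial.coeff_mul_C]
        congr 1
        show ((P m k i).map (starRingEnd ℂ)).coeff m = _
        rw [Polynomial.coeff_map, Matrix.conjTranspose_apply, hSdef, Matrix.map_apply]
        rfl
      rw [Finset.sum_congr rfl fun k _ => hterm k]
      have hmm : (∑ k, Sᴴ i k * Cm k j) = (Sᴴ * Cm) i j := (Matrix.mul_apply).symm
      rw [hmm, hCm, ← Matrix.mul_assoc, Matrix.mul_nonsing_inv _ hSu, Matrix.one_mul]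
    have hRdeg : ∀ i j, (R i j).degree < (m : ℕ) := by
      intro i j
      rw [Polynomial.degree_lt_iff_coeff_zero]
      intro k hk
      rw [hR, Matrix.sub_apply, Polynomial.coeff_sub]
      rcases eq_or_lt_of_le hk with h | h
      · rw [← h, hcoeffprod i j, hMdef, Matrix.map_apply, sub_self]
      · have hk' : (m : WithBot ℕ) < (k : WithBot ℕ) := by exact_mod_cast h
        rw [Polynomial.coeff_eq_zero_of_degree_lt (lt_of_le_of_lt (hQdeg i j) hk'),
          Polynomial.coeff_eq_zero_of_degree_lt (lt_of_le_of_lt (hproddeg i j) hk'),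
          sub_self]
    obtain ⟨C', hC'⟩ := IH R hRdeg
    refine ⟨fun k => if k = m then Cm else C' k, ?_⟩
    rw [Finset.sum_range_succ]
    have h1 : ∀ k ∈ Finset.range m,
        starMP (P k) * ((if k = m then Cm else C' k).map Polynomial.C)
          = starMP (P k) * (C' k).map Polynomial.C := by
      intro k hk
      rw [if_neg (Nat.ne_of_lt (Finset.mem_range.1 hk))]
    have h2 : (fun k => if k = m then Cm else C' k) m = Cm := by simp
    rw [Finset.sum_congr rfl h1, ← hC', h2, hR]
    abel

lemma eval_cont (p : Polynomial ℂ) : Continuous fun t : ℝ => p.eval (t : ℂ) :=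
  p.continuous.comp Complex.continuous_ofReal

lemma base_int (hab : a ≤ b) (Wt : MatrixWeight L a b) (p q : Polynomial ℂ) (k l : Fin L) :
    IntegrableOn (fun t : ℝ => p.eval (t : ℂ) * Wt.W t k l * q.eval (t : ℂ))
      (Set.Ioo a b) volume := by
  obtain ⟨Cb, hCb⟩ := (isCompact_Icc (a := a) (b := b)).exists_bound_of_continuousOn
    (f := fun t : ℝ => p.eval (t : ℂ) * q.eval (t : ℂ))
    (((eval_cont p).mul (eval_cont q)).continuousOn)
  have hW : IntegrableOn (fun t => ‖Wt.W t k l‖) (Set.Ioo a b) volume := by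
    have h0 := Wt.moments 0 k l
    simp only [pow_zero, one_mul] at h0
    exact (intervalIntegrable_iff_integrableOn_Ioo_of_le hab).1 h0
  refine Integrable.mono' (hW.const_mul Cb) ?_ ?_
  · refine ContinuousOn.aestronglyMeasurable ?_ measurableSet_Ioo
    exact (((eval_cont p).continuousOn.mul ((Wt.smooth k l).continuousOn)).mul
      (eval_cont q).continuousOn)
  · refine (ae_restrict_iff' measurableSet_Ioo).2 (Filter.Eventually.of_forall fun t ht => ?_)
    have h1 : ‖p.eval (t : ℂ) * Wt.W t k l * q.eval (t : ℂ)‖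
        = ‖p.eval (t : ℂ) * q.eval (t : ℂ)‖ * ‖Wt.W t k l‖ := by
      simp [norm_mul]; ring
    rw [h1]
    exact mul_le_mul_of_nonneg_right
      (hCb t (Set.mem_Icc_of_Ioo ht)) (norm_nonneg _)

lemma entry_int (hab : a ≤ b) (Wt : MatrixWeight L a b) (Q R : MP L) (i j : Fin L) :
    IntegrableOn (fun t => ((evalM Q t)ᴴ * Wt.W t * evalM R t) i j) (Set.Ioo a b) volume := by
  have hrw : ∀ t : ℝ, ((evalM Q t)ᴴ * Wt.W t * evalM R t) i j
      = ∑ l : Fin L, ∑ k : Fin L,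
          (((Q k i).map (starRingEnd ℂ)).eval (t : ℂ) * Wt.W t k l * (R l j).eval (t : ℂ)) := by
    intro t
    rw [Matrix.mul_apply]
    refine Finset.sum_congr rfl fun l _ => ?_
    rw [Matrix.mul_apply, Finset.sum_mul]
    refine Finset.sum_congr rfl fun k _ => ?_
    rw [Matrix.conjTranspose_apply, evalM]
    simp only [Matrix.of_apply, evalM]
    rw [Polynomial.eval_map,
      show ((t : ℂ)) = (starRingEnd ℂ) (t : ℂ) from (Complex.conj_ofReal t).symm,
      Polynomial.eval₂_at_apply]
    simp [Complex.conj_ofReal]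
  simp only [hrw]
  exact integrable_finset_sum _ fun l _ => integrable_finset_sum _ fun k _ =>
    base_int hab Wt _ _ _ _

lemma entry_ii (hab : a ≤ b) (Wt : MatrixWeight L a b) (Q R : MP L) (i j : Fin L) :
    IntervalIntegrable (fun t => ((evalM Q t)ᴴ * Wt.W t * evalM R t) i j) volume a b :=
  (intervalIntegrable_iff_integrableOn_Ioo_of_le hab).2 (entry_int hab Wt Q R i j)

/-- The pairing `⟨Q,R⟩ = ∫ₐᵇ Q(t)* W(t) R(t) dt`. -/
def ip (Wt : MatrixWeight L a b) (Q R : MP L) : Matrix (Fin L) (Fin L) ℂ :=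
  Matrix.of fun i j => ∫ t in a..b, ((evalM Q t)ᴴ * Wt.W t * evalM R t) i j

lemma ip_star_star (Wt : MatrixWeight L a b) (A B : MP L) :
    ip Wt (starMP A) (starMP B) = mop Wt A B := by
  ext i j
  show (∫ t in a..b, ((evalM (starMP A) t)ᴴ * Wt.W t * evalM (starMP B) t) i j) = _
  simp only [evalM_starMP, Matrix.conjTranspose_conjTranspose]
  rfl

lemma ip_mul_const_right (hab : a ≤ b) (Wt : MatrixWeight L a b) (Q R : MP L)
    (M : Matrix (Fin L) (Fin L) ℂ) :
    ip Wt Q (R * M.map Polynomial.C) = ip Wt Q R * M := by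
  ext i j
  show (∫ t in a..b, ((evalM Q t)ᴴ * Wt.W t * evalM (R * M.map Polynomial.C) t) i j)
    = (ip Wt Q R * M) i j
  have hrw : ∀ t : ℝ, ((evalM Q t)ᴴ * Wt.W t * evalM (R * M.map Polynomial.C) t) i j
      = ∑ k : Fin L, ((evalM Q t)ᴴ * Wt.W t * evalM R t) i k * M k j := by
    intro t
    rw [evalM_mul, evalM_map_const, ← Matrix.mul_assoc, Matrix.mul_apply]
  simp only [hrw]
  rw [intervalIntegral.integral_finset_sum fun k _ =>
    (entry_ii hab Wt Q R i k).mul_const (M k j)]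
  rw [Matrix.mul_apply]
  exact Finset.sum_congr rfl fun k _ => intervalIntegral.integral_mul_const _ _

lemma ip_mul_const_left (hab : a ≤ b) (Wt : MatrixWeight L a b) (Q R : MP L)
    (M : Matrix (Fin L) (Fin L) ℂ) :
    ip Wt (Q * M.map Polynomial.C) R = Mᴴ * ip Wt Q R := by
  ext i j
  show (∫ t in a..b, ((evalM (Q * M.map Polynomial.C) t)ᴴ * Wt.W t * evalM R t) i j)
    = (Mᴴ * ip Wt Q R) i j
  have hrw : ∀ t : ℝ, ((evalM (Q * M.map Polynomial.C) t)ᴴ * Wt.W t * evalM R t) i j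
      = ∑ k : Fin L, Mᴴ i k * ((evalM Q t)ᴴ * Wt.W t * evalM R t) k j := by
    intro t
    rw [evalM_mul, evalM_map_const, Matrix.conjTranspose_mul,
      Matrix.mul_assoc, Matrix.mul_assoc, Matrix.mul_apply]
    exact Finset.sum_congr rfl fun k _ => by rw [← Matrix.mul_assoc]
  simp only [hrw]
  rw [intervalIntegral.integral_finset_sum fun k _ =>
    (entry_ii hab Wt Q R k j).const_mul (Mᴴ i k)]
  rw [Matrix.mul_apply]
  exact Finset.sum_congr rfl fun k _ => intervalIntegral.integral_const_mul _ _

lemma ip_sum_left (hab : a ≤ b) (Wt : MatrixWeight L a b) {ι : Type*} (s : Finset ι)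
    (Q : ι → MP L) (R : MP L) :
    ip Wt (∑ k ∈ s, Q k) R = ∑ k ∈ s, ip Wt (Q k) R := by
  ext i j
  show (∫ t in a..b, ((evalM (∑ k ∈ s, Q k) t)ᴴ * Wt.W t * evalM R t) i j)
    = (∑ k ∈ s, ip Wt (Q k) R) i j
  have hrw : ∀ t : ℝ, ((evalM (∑ k ∈ s, Q k) t)ᴴ * Wt.W t * evalM R t) i j
      = ∑ k ∈ s, ((evalM (Q k) t)ᴴ * Wt.W t * evalM R t) i j := by
    intro t
    rw [evalM_sum]
    rw [Matrix.conjTranspose_sum, Finset.sum_mul, Finset.sum_mul, Matrix.sum_apply]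
  simp only [hrw]
  rw [intervalIntegral.integral_finset_sum fun k _ => entry_ii hab Wt (Q k) R i j,
    Matrix.sum_apply]
  rfl

lemma ip_sum_right (hab : a ≤ b) (Wt : MatrixWeight L a b) {ι : Type*} (s : Finset ι)
    (Q : MP L) (R : ι → MP L) :
    ip Wt Q (∑ k ∈ s, R k) = ∑ k ∈ s, ip Wt Q (R k) := by
  ext i j
  show (∫ t in a..b, ((evalM Q t)ᴴ * Wt.W t * evalM (∑ k ∈ s, R k) t) i j)
    = (∑ k ∈ s, ip Wt Q (R k)) i j
  have hrw : ∀ t : ℝ, ((evalM Q t)ᴴ * Wt.W t * evalM (∑ k ∈ s, R k) t) i j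
      = ∑ k ∈ s, ((evalM Q t)ᴴ * Wt.W t * evalM (R k) t) i j := by
    intro t
    rw [evalM_sum, Finset.mul_sum, Matrix.sum_apply]
  simp only [hrw]
  rw [intervalIntegral.integral_finset_sum fun k _ => entry_ii hab Wt Q (R k) i j,
    Matrix.sum_apply]
  rfl

lemma quad_int (N : ℝ → Matrix (Fin L) (Fin L) ℂ)
    (hii : ∀ i j, IntervalIntegrable (fun t => N t i j) volume a b) (v : Fin L → ℂ) :
    star v ⬝ᵥ ((Matrix.of fun i j => ∫ t in a..b, N t i j) *ᵥ v)
      = ∫ t in a..b, star v ⬝ᵥ (N t *ᵥ v) := by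
  calc star v ⬝ᵥ ((Matrix.of fun i j => ∫ t in a..b, N t i j) *ᵥ v)
      = ∑ i, star v i * ∑ j, (∫ t in a..b, N t i j) * v j := by
        simp [dotProduct, Matrix.mulVec]
    _ = ∑ i, star v i * ∑ j, ∫ t in a..b, N t i j * v j := by
        refine Finset.sum_congr rfl fun i _ => ?_
        congr 1
        exact Finset.sum_congr rfl fun j _ =>
          (intervalIntegral.integral_mul_const _ _).symm
    _ = ∑ i, star v i * ∫ t in a..b, ∑ j, N t i j * v j := by
        refine Finset.sum_congr rfl fun i _ => ?_
        congr 1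
        exact (intervalIntegral.integral_finset_sum fun j _ =>
          (hii i j).mul_const (v j)).symm
    _ = ∑ i, ∫ t in a..b, star v i * ∑ j, N t i j * v j := by
        refine Finset.sum_congr rfl fun i _ => ?_
        exact (intervalIntegral.integral_const_mul _ _).symm
    _ = ∫ t in a..b, ∑ i, star v i * ∑ j, N t i j * v j := by
        have hs : ∀ i : Fin L,
            IntervalIntegrable (fun t => ∑ j, N t i j * v j) volume a b := by
          intro i
          have h2 := IntervalIntegrable.sum (μ := volume) (a := a) (b := b) Finset.univ
            (f := fun j => fun t => N t i j * v j) (fun j _ => (hii i j).mul_const (v j))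
          simpa [Finset.sum_fn] using h2
        exact (intervalIntegral.integral_finset_sum fun i _ =>
          (hs i).const_mul (star v i)).symm
    _ = ∫ t in a..b, star v ⬝ᵥ (N t *ᵥ v) := by
        refine intervalIntegral.integral_congr fun t _ => ?_
        simp [dotProduct, Matrix.mulVec]

set_option maxHeartbeats 1000000 in
lemma ip_self_det_ne (hab : a < b) (Wt : MatrixWeight L a b) (A : MP L) (m : ℕ)
    (hlead : (A.map fun q => q.coeff m).det ≠ 0) :
    (ip Wt (starMP A) (starMP A)).det ≠ 0 := by
  intro hdet
  obtain ⟨v, hv, hMv⟩ := Matrix.exists_mulVec_eq_zero_iff.2 hdet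
  set B : MP L := starMP A with hB
  set N : ℝ → Matrix (Fin L) (Fin L) ℂ :=
    fun t => (evalM B t)ᴴ * Wt.W t * evalM B t with hN
  set f : ℝ → ℂ := fun t => star v ⬝ᵥ (N t *ᵥ v) with hf
  set u : Fin L → Polynomial ℂ := fun i => ∑ j, B i j * Polynomial.C (v j) with hu
  have hweval : ∀ (t : ℝ) (i : Fin L), (evalM B t *ᵥ v) i = (u i).eval (t : ℂ) := by
    intro t i
    simp [Matrix.mulVec, dotProduct, hu, Polynomial.eval_finset_sum, evalM]
  have hfw : ∀ t : ℝ, f t = star (evalM B t *ᵥ v) ⬝ᵥ (Wt.W t *ᵥ (evalM B t *ᵥ v)) := by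
    intro t
    simp only [hf, hN]
    rw [← Matrix.mulVec_mulVec, ← Matrix.mulVec_mulVec]
    rw [Matrix.dotProduct_mulVec, ← Matrix.star_mulVec]
  have hnonneg : ∀ t ∈ Set.Ioo a b, (0 : ℂ) ≤ f t := by
    intro t ht
    rw [hfw t]
    exact (Wt.posdef t ht).posSemidef.dotProduct_mulVec_nonneg _
  have hune : ∃ i0, u i0 ≠ 0 := by
    by_contra h
    push_neg at h
    have hS : ((A.map fun q => q.coeff m)ᴴ *ᵥ v) = 0 := by
      funext i
      have hc : (u i).coeff m = 0 := by rw [h i, Polynomial.coeff_zero]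
      rw [hu] at hc
      simp only [Polynomial.finset_sum_coeff, Polynomial.coeff_mul_C] at hc
      simpa [Matrix.mulVec, dotProduct, Matrix.conjTranspose_apply, Matrix.map_apply,
        hB, starMP, Polynomial.coeff_map] using hc
    have hd : ((A.map fun q => q.coeff m)ᴴ).det = 0 :=
      Matrix.exists_mulVec_eq_zero_iff.1 ⟨v, hv, hS⟩
    rw [Matrix.det_conjTranspose] at hd
    exact hlead (by simpa using congrArg star hd)
  obtain ⟨i0, hi0⟩ := hune
  have hpos : ∀ t ∈ Set.Ioo a b, (u i0).eval (t : ℂ) ≠ 0 → (0 : ℂ) < f t := by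
    intro t ht hne
    rw [hfw t]
    refine (Wt.posdef t ht).dotProduct_mulVec_pos ?_
    intro hw0
    exact hne (by rw [← hweval t i0, hw0]; rfl)
  have hNint : ∀ i j, IntegrableOn (fun t => N t i j) (Set.Ioo a b) volume :=
    fun i j => entry_int hab.le Wt B B i j
  have hfint' : IntegrableOn f (Set.Ioo a b) volume := by
    have hfe : f = fun t => ∑ i, star v i * ∑ j, N t i j * v j := by
      funext t
      simp [hf, dotProduct, Matrix.mulVec]
    rw [hfe]
    exact integrable_finset_sum _ fun i _ =>
      ((integrable_finset_sum _ fun j _ => (hNint i j).mul_const (v j)).const_mul _)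
  have hrestr : volume.restrict (Set.Ioc a b) = volume.restrict (Set.Ioo a b) :=
    (Measure.restrict_congr_set Ioo_ae_eq_Ioc).symm
  have hfint : IntegrableOn f (Set.Ioc a b) volume := by
    rw [IntegrableOn, hrestr]; exact hfint'
  have hquad : star v ⬝ᵥ (ip Wt B B *ᵥ v) = ∫ t in a..b, f t := by
    have h := quad_int N (fun i j => entry_ii hab.le Wt B B i j) v
    have hip : ip Wt B B = Matrix.of fun i j => ∫ t in a..b, N t i j := rfl
    rw [hip]
    exact h
  have hzero : (∫ t in a..b, f t) = 0 := by
    rw [← hquad, hMv, dotProduct_zero]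
  have hIoc : (∫ t in a..b, f t) = ∫ t in Set.Ioc a b, f t :=
    intervalIntegral.integral_of_le hab.le
  set r : ℝ → ℝ := fun t => (f t).re with hr
  have hrint : IntegrableOn r (Set.Ioc a b) volume := hfint.re
  have hrnonneg : 0 ≤ᵐ[volume.restrict (Set.Ioc a b)] r := by
    rw [hrestr]
    refine (ae_restrict_iff' measurableSet_Ioo).2 (Filter.Eventually.of_forall fun t ht => ?_)
    exact (Complex.le_def.1 (hnonneg t ht)).1
  have hZfin : Set.Finite {t : ℝ | (u i0).eval (t : ℂ) = 0} := by
    have hZ : {t : ℝ | (u i0).eval (t : ℂ) = 0}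
        = (fun t : ℝ => (t : ℂ)) ⁻¹' {z : ℂ | (u i0).IsRoot z} := rfl
    rw [hZ]
    exact Set.Finite.preimage (Set.injOn_of_injective Complex.ofReal_injective)
      (Polynomial.finite_setOf_isRoot hi0)
  have hsupp : Set.Ioo a b \ {t : ℝ | (u i0).eval (t : ℂ) = 0}
      ⊆ Function.support r ∩ Set.Ioc a b := by
    rintro t ⟨ht, htZ⟩
    refine ⟨?_, Set.Ioo_subset_Ioc_self ht⟩
    have hlt := hpos t ht htZ
    have hre : 0 < (f t).re := (Complex.lt_def.1 hlt).1
    exact ne_of_gt hre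
  have hμ : 0 < volume (Function.support r ∩ Set.Ioc a b) := by
    refine lt_of_lt_of_le ?_ (measure_mono hsupp)
    rw [measure_diff_null (Set.Finite.measure_zero hZfin volume)]
    rw [Real.volume_Ioo]
    exact ENNReal.ofReal_pos.2 (sub_pos.2 hab)
  have hrpos : 0 < ∫ t in Set.Ioc a b, r t :=
    (setIntegral_pos_iff_support_of_nonneg_ae hrnonneg hrint).2 hμ
  have hre : (∫ t in Set.Ioc a b, r t) = (∫ t in Set.Ioc a b, f t).re := by
    simpa [hr, RCLike.re_to_complex] using integral_re (𝕜 := ℂ) hfint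
  rw [hre, ← hIoc, hzero] at hrpos
  simp at hrpos

end Aux

/-- If `D ∈ 𝒟` is symmetric with respect to `W`, then every `Pₙ*` is an eigenfunction:
`D(Pₙ*) = Pₙ*·Λₙ` for some matrix `Λₙ`. -/
theorem symmetric_implies_eigenfunction (L : ℕ) (a b : ℝ) (hab : a < b)
    (Wt : MatrixWeight L a b) (P : ℕ → MP L) (hP : IsMOPS Wt P)
    (D : MP L → MP L) (hD : InD D)
    (hsym : ∀ (Pp Qq : MP L) (i j : Fin L),
      (∫ t in a..b, ((evalM (D Qq) t)ᴴ * Wt.W t * evalM Pp t) i j)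
        = ∫ t in a..b, ((evalM Qq t)ᴴ * Wt.W t * evalM (D Pp) t) i j) :
    ∀ n : ℕ, ∃ Λ : Matrix (Fin L) (Fin L) ℂ,
      D (starMP (P n)) = starMP (P n) * Λ.map Polynomial.C := by
  obtain ⟨hdeg, hlead, horth⟩ := hP
  intro n
  -- `D(Pₙ*)` has entries of degree `≤ n`
  have hAdeg : ∀ i j, ((starMP (P n)) i j).degree ≤ (n : WithBot ℕ) := fun i j => by
    rw [Aux.starMP_degree]; exact hdeg n j i
  have hDdeg := Aux.degree_D D hD (starMP (P n)) n hAdeg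
  have hDdeg' : ∀ i j, ((D (starMP (P n))) i j).degree < ((n + 1 : ℕ) : WithBot ℕ) := by
    intro i j
    refine lt_of_le_of_lt (hDdeg i j) ?_
    exact_mod_cast Nat.lt_succ_self n
  obtain ⟨C, hC⟩ := Aux.span_lemma P hdeg hlead (n + 1) (D (starMP (P n))) hDdeg'
  -- symmetry of `D` in terms of the pairing
  have hsymip : ∀ Pp Qq : MP L, Aux.ip Wt (D Qq) Pp = Aux.ip Wt Qq (D Pp) := by
    intro Pp Qq
    ext i j
    exact hsym Pp Qq i j
  -- the lower coefficients vanish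
  have hkey : ∀ m, m < n → C m = 0 := by
    intro m hmn
    have h1 : Aux.ip Wt (starMP (P m)) (D (starMP (P n))) = mop Wt (P m) (P m) * C m := by
      rw [hC, Aux.ip_sum_right hab.le]
      have hterm : ∀ k ∈ Finset.range (n + 1),
          Aux.ip Wt (starMP (P m)) (starMP (P k) * (C k).map Polynomial.C)
            = mop Wt (P m) (P k) * C k := by
        intro k _
        rw [Aux.ip_mul_const_right hab.le, Aux.ip_star_star]
      rw [Finset.sum_congr rfl hterm]
      rw [Finset.sum_eq_single_of_mem m
        (Finset.mem_range.2 (Nat.lt_succ_of_lt hmn))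
        (fun k _ hk => by rw [horth m k (Ne.symm hk), Matrix.zero_mul])]
    have h2 : Aux.ip Wt (starMP (P m)) (D (starMP (P n))) = 0 := by
      rw [← hsymip (starMP (P n)) (starMP (P m))]
      have hmdeg : ∀ i j, ((D (starMP (P m))) i j).degree < ((m + 1 : ℕ) : WithBot ℕ) := by
        intro i j
        refine lt_of_le_of_lt (Aux.degree_D D hD (starMP (P m)) m
          (fun i j => by rw [Aux.starMP_degree]; exact hdeg m j i) i j) ?_
        exact_mod_cast Nat.lt_succ_self m
      obtain ⟨B, hB⟩ := Aux.span_lemma P hdeg hlead (m + 1) (D (starMP (P m))) hmdeg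
      rw [hB, Aux.ip_sum_left hab.le]
      refine Finset.sum_eq_zero fun k hk => ?_
      rw [Aux.ip_mul_const_left hab.le, Aux.ip_star_star,
        horth k n (Nat.ne_of_lt (lt_of_lt_of_le (Finset.mem_range.1 hk)
          (Nat.succ_le_of_lt hmn))), Matrix.mul_zero]
    have h3 : mop Wt (P m) (P m) * C m = 0 := by rw [← h1, h2]
    have hdet : (mop Wt (P m) (P m)).det ≠ 0 := by
      have hh := Aux.ip_self_det_ne hab Wt (P m) m (hlead m)
      rwa [Aux.ip_star_star] at hh
    have h4 := congrArg (fun X => (mop Wt (P m) (P m))⁻¹ * X) h3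
    simpa [← Matrix.mul_assoc,
      Matrix.nonsing_inv_mul _ (isUnit_iff_ne_zero.2 hdet)] using h4
  refine ⟨C n, ?_⟩
  rw [hC, Finset.sum_range_succ]
  have hz : ∀ k ∈ Finset.range n, starMP (P k) * (C k).map Polynomial.C = 0 := by
    intro k hk
    rw [hkey k (Finset.mem_range.1 hk)]
    have hm0 : ((0 : Matrix (Fin L) (Fin L) ℂ)).map Polynomial.C
        = (0 : MP L) := by
      ext i j; simp
    rw [hm0, Matrix.mul_zero]
  rw [Finset.sum_congr rfl hz, Finset.sum_const_zero, zero_add]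
end
end
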